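/- arXiv:1404.3311 — 10 statements merged into one kernel-verified Lean document; each statement's English description precedes it below -/
import Mathlib

section
/- Let Q be an n-element set, let M_1,...,M_ℓ be a sequence of m-element subsets of Q (for some 1 < m ≤ n), and let R_1,...,R_ℓ be a sequence of 2-element subsets of Q such that R_i ⊆ M_i for all 1 ≤ i ≤ ℓ, and R_i ⊄ M_j whenever 1 ≤ j < i ≤ ℓ. Then ℓ ≤ (n-m+2)(n-m+1)/2. -/
/-!
Choose distinct rationals `t q` for `q ∈ Q` and put `N = n - m + 2`,
`v x = (1, x, …, x ^ (N - 1))`. Fixing the rows `v (t d)`, `d ∉ M j`, of an `N × N`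
determinant leaves an alternating bilinear form `f j` on `ℚ ^ N`, and for `R i = {a, b}` the
value `f j (v (t a)) (v (t b))` is a Vandermonde determinant, which vanishes exactly when
`R i ⊄ M j`. The matrix of these values is therefore upper triangular with nonzero diagonal,
so the `f j` are linearly independent in the space of alternating forms on `ℚ ^ N` (encoded by
their Gram matrices), whose dimension is `N.choose 2`.
-/

open Function Matrix

theorem linearIndependent_of_triangular_pairing {ι K V : Type*} [Fintype ι] [LinearOrder ι]
    [CommRing K] [IsDomain K] [AddCommGroup V] [Module K V]
    (f : ι → V) (φ : ι → Module.Dual K V)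
    (h_lt : ∀ i j, j < i → φ i (f j) = 0) (h_diag : ∀ i, φ i (f i) ≠ 0) :
    LinearIndependent K f := by
  have h_det : (Matrix.of fun i j => φ i (f j)).det ≠ 0 := by
    rw [det_of_isUpperTriangular (M := Matrix.of fun i j => φ i (f j)) fun i j => h_lt i j]
    exact Finset.prod_ne_zero_iff.mpr fun i _ => h_diag i
  exact LinearIndependent.of_comp (LinearMap.pi φ) (linearIndependent_cols_of_det_ne_zero h_det)

section AlternatingMatrices

variable {K : Type*} [CommRing K]

variable (K) in
def alternatingMatrices (n : Type*) : Submodule K (Matrix n n K) where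
  carrier := {A | Aᵀ = -A ∧ ∀ i, A i i = 0}
  add_mem' := by
    rintro A B ⟨hA, hA'⟩ ⟨hB, hB'⟩
    exact ⟨by simp [hA, hB, add_comm], fun i => by simp [hA', hB']⟩
  zero_mem' := ⟨by simp, fun _ => rfl⟩
  smul_mem' := by
    rintro c A ⟨hA, hA'⟩
    exact ⟨by simp [hA], fun i => by simp [hA']⟩

theorem LinearMap.IsAlt.toMatrix₂'_mem_alternatingMatrices {n : Type*} [Fintype n]
    [DecidableEq n] {B : (n → K) →ₗ[K] (n → K) →ₗ[K] K} (hB : B.IsAlt) :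
    LinearMap.toMatrix₂' K B ∈ alternatingMatrices K n := by
  refine ⟨Matrix.ext fun p q => ?_, fun p => ?_⟩
  · rw [transpose_apply, Matrix.neg_apply, LinearMap.toMatrix₂'_apply,
      LinearMap.toMatrix₂'_apply, LinearMap.IsAlt.neg hB]
  · simp [LinearMap.toMatrix₂'_apply, hB.self_eq_zero]

theorem eq_zero_of_mem_alternatingMatrices_of_forall_lt {n : Type*} [LinearOrder n]
    {A : Matrix n n K} (hA : A ∈ alternatingMatrices K n) (h_lt : ∀ p q, p < q → A p q = 0) :
    A = 0 := by
  obtain ⟨h_skew, h_diag⟩ := hA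
  ext p q
  rcases lt_trichotomy p q with hpq | rfl | hqp
  · exact h_lt p q hpq
  · exact h_diag p
  · rw [← transpose_apply A q p, h_skew, Matrix.neg_apply, h_lt q p hqp, neg_zero]
    rfl

/-- The entries above the diagonal determine an alternating matrix. -/
theorem LinearIndependent.card_le_choose_two_of_mem_alternatingMatrices [Nontrivial K]
    {ι : Type*} [Fintype ι] {N : ℕ} {A : ι → Matrix (Fin N) (Fin N) K}
    (hA : LinearIndependent K A) (h_alt : ∀ i, A i ∈ alternatingMatrices K (Fin N)) :
    Fintype.card ι ≤ N.choose 2 := by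
  let upperEntries : Matrix (Fin N) (Fin N) K →ₗ[K] ({z : Fin N × Fin N // z.1 < z.2} → K) :=
    LinearMap.pi fun z => LinearMap.proj z.1.2 ∘ₗ LinearMap.proj z.1.1
  have h_span : Submodule.span K (Set.range A) ≤ alternatingMatrices K (Fin N) :=
    Submodule.span_le.mpr <| Set.range_subset_iff.mpr h_alt
  have h_disj : Disjoint (Submodule.span K (Set.range A)) (LinearMap.ker upperEntries) :=
    Submodule.disjoint_def.mpr fun B hB hker =>
      eq_zero_of_mem_alternatingMatrices_of_forall_lt (h_span hB) fun p q hpq =>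
        congr_fun (LinearMap.mem_ker.mp hker) ⟨(p, q), hpq⟩
  calc Fintype.card ι ≤ Module.finrank K ({z : Fin N × Fin N // z.1 < z.2} → K) :=
        (hA.map h_disj).fintype_card_le_finrank
    _ = N.choose 2 := by
        rw [Module.finrank_fintype_fun_eq_card, Fintype.card_subtype,
          Fintype.card_product_filter_lt, Fintype.card_fin]

end AlternatingMatrices

section DetForm

variable {K : Type*} [CommRing K] {T : ℕ}

def detForm (r : Fin T → Fin (T + 2) → K) :
    (Fin (T + 2) → K) →ₗ[K] (Fin (T + 2) → K) →ₗ[K] K :=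
  LinearMap.mk₂ K (fun x y => (detRowAlternating.curryLeft x).curryLeft y r)
    (fun _ _ _ => by simp) (fun _ _ _ => by simp) (fun _ _ _ => by simp) (fun _ _ _ => by simp)

theorem detForm_apply (r : Fin T → Fin (T + 2) → K) (x y : Fin (T + 2) → K) :
    detForm r x y = detRowAlternating (vecCons x (vecCons y r)) :=
  rfl

theorem detForm_isAlt (r : Fin T → Fin (T + 2) → K) : (detForm r).IsAlt := fun _ =>
  detRowAlternating.map_eq_zero_of_eq _ (i := 0) (j := 1) rfl Fin.zero_ne_one

theorem det_eq_detForm (A : Matrix (Fin (T + 2)) (Fin (T + 2)) K) :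
    A.det = detForm (fun k => A k.succ.succ) (A 0) (A 1) := by
  have h_rows : vecCons (A 0) (vecCons (A 1) fun k => A k.succ.succ) = A := by
    funext i
    refine Fin.cases ?_ (fun i => Fin.cases ?_ (fun k => ?_) i) i <;> rfl
  rw [detForm_apply, h_rows]
  rfl

theorem det_vandermonde_cons_cons (v : Fin T → K) (a b : K) :
    (vandermonde (vecCons a (vecCons b v))).det =
      detForm (fun k l => v k ^ (l : ℕ)) (fun l => a ^ (l : ℕ)) (fun l => b ^ (l : ℕ)) :=
  det_eq_detForm _

end DetForm

theorem det_vandermonde_cons_cons_ne_zero_iff {Q K : Type*} [CommRing K] [IsDomain K]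
    {T : ℕ} {t : Q → K} (ht : Injective t) {d : Fin T → Q} (hd : Injective d) {a b : Q}
    (hab : a ≠ b) :
    (vandermonde (vecCons (t a) (vecCons (t b) (t ∘ d)))).det ≠ 0 ↔
      a ∉ Set.range d ∧ b ∉ Set.range d := by
  rw [det_vandermonde_ne_zero_iff, vecCons, vecCons, ← Fin.comp_cons, ← Fin.comp_cons,
    ht.of_comp_iff]
  simp [Fin.cons_injective_iff, Fin.range_cons, hab, hd]

theorem Finset.exists_injective_fin_range_eq {α : Type*} (s : Finset α) {T : ℕ}
    (hs : s.card = T) :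
    ∃ d : Fin T → α, Injective d ∧ Set.range d = s :=
  ⟨Subtype.val ∘ (s.equivFinOfCardEq hs).symm, Subtype.val_injective.comp (Equiv.injective _),
    by rw [Set.range_comp, Equiv.range_eq_univ, Set.image_univ, Subtype.range_coe]⟩

theorem frankl_pin_general {Q : Type*} [Fintype Q] (n m ℓ : ℕ)
    (hn : Fintype.card Q = n)
    (M R : Fin ℓ → Finset Q)
    (hM : ∀ i, (M i).card = m) (hR : ∀ i, (R i).card = 2)
    (hsub : ∀ i, R i ⊆ M i)
    (hnot : ∀ i j : Fin ℓ, j < i → ¬ R i ⊆ M j) :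
    ℓ ≤ (n - m + 2) * (n - m + 1) / 2 := by
  classical
  obtain ⟨t, ht⟩ : ∃ t : Q → ℚ, Injective t :=
    ⟨_, Nat.cast_injective.comp (Fin.val_injective.comp (Fintype.equivFin Q).injective)⟩
  choose a b hab hR using fun i => Finset.card_eq_two.mp (hR i)
  have h_compl : ∀ j, (M j)ᶜ.card = n - m := fun j => by rw [Finset.card_compl, hM, hn]
  choose d hd hd_range using fun j => (M j)ᶜ.exists_injective_fin_range_eq (h_compl j)
  let powers (x : ℚ) : Fin (n - m + 2) → ℚ := fun l => x ^ (l : ℕ)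
  let A j := LinearMap.toMatrix₂' ℚ (detForm fun k => powers (t (d j k)))
  let φ i : Module.Dual ℚ (Matrix (Fin (n - m + 2)) (Fin (n - m + 2)) ℚ) :=
    LinearMap.applyₗ (powers (t (b i))) ∘ₗ LinearMap.applyₗ (powers (t (a i))) ∘ₗ
      (Matrix.toLinearMap₂' ℚ).toLinearMap
  have h_pairing : ∀ i j, φ i (A j) ≠ 0 ↔ R i ⊆ M j := by
    intro i j
    have h_vandermonde :
        φ i (A j) = (vandermonde (vecCons (t (a i)) (vecCons (t (b i)) (t ∘ d j)))).det := by
      simp only [φ, A, LinearMap.comp_apply, LinearEquiv.coe_coe, LinearMap.applyₗ_apply_apply,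
        Matrix.toLinearMap₂'_toMatrix']
      exact (det_vandermonde_cons_cons _ _ _).symm
    rw [h_vandermonde, det_vandermonde_cons_cons_ne_zero_iff ht (hd j) (hab i), hd_range, hR]
    simp [Finset.insert_subset_iff]
  have hA : LinearIndependent ℚ A := linearIndependent_of_triangular_pairing A φ
    (fun i j hji => not_ne_iff.mp (mt (h_pairing i j).mp (hnot i j hji)))
    (fun i => (h_pairing i i).mpr (hsub i))
  have h_card := hA.card_le_choose_two_of_mem_alternatingMatrices fun j =>
    (detForm_isAlt _).toMatrix₂'_mem_alternatingMatrices
  simpa [Nat.choose_two_right] using h_card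

/-- Frankl's theorem (Frankl-Pin sequences): if `M i` are `m`-subsets of an `n`-set `Q`,
`R i` are 2-subsets with `R i ⊆ M i` and `R i ⊄ M j` for `j < i`,
then `ℓ ≤ (n-m+2)(n-m+1)/2`. -/
theorem frankl_pin {Q : Type*} [Fintype Q] [DecidableEq Q] (n m ℓ : ℕ)
    (hn : Fintype.card Q = n) (hm1 : 1 < m) (hmn : m ≤ n)
    (M R : Fin ℓ → Finset Q)
    (hM : ∀ i, (M i).card = m) (hR : ∀ i, (R i).card = 2)
    (hsub : ∀ i, R i ⊆ M i)
    (hnot : ∀ i j : Fin ℓ, j < i → ¬ R i ⊆ M j) :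
    ℓ ≤ (n - m + 2) * (n - m + 1) / 2 :=
  frankl_pin_general n m ℓ hn M R hM hR hsub hnot
end

section
/- Let A = ⟨Q, Σ, δ⟩ be a deterministic finite automaton with n states. Let P be a set of compressible pairs of states, h(P) the synchronizing height of P (the minimal h such that every pair {x,y} ∈ P satisfies δ(x,w) = δ(y,w) for some word w of length at most h), and p(P) the maximal length of a Frankl-Pin sequence over P. Then for every compressible m-element subset M of Q with 2 ≤ m ≤ n, there exists a word w with |δ(M,w)| < |M| whose length is at most (n-m+2 choose 2) - p(P) + h(P). -/
open Finset Matrix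

namespace PairsBoundAux



/-- standard basis row -/
def es {N : ℕ} (k : Fin N) : Fin N → ℝ := fun j => if k = j then 1 else 0

lemma det_expand_pair {c : ℕ} (vx vy : Fin (c+2) → ℝ) (Z : Fin c → Fin (c+2) → ℝ) :
    (Matrix.of (Fin.cons vx (Fin.cons vy Z))).det
      = ∑ k : Fin (c+2), ∑ l : Fin (c+2), vx k * vy l *
          (Matrix.of (Fin.cons (es k) (Fin.cons (es l) Z))).det := by
  set f := (Matrix.detRowAlternating : (Fin (c+2) → ℝ) [⋀^Fin (c+2)]→ₗ[ℝ] ℝ) with hf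
  have hdet : ∀ m : Fin (c+2) → Fin (c+2) → ℝ, (Matrix.of m).det = f m := fun _ => rfl
  have hupd1 : ∀ b wrow : Fin (c+2) → ℝ,
      Function.update (Fin.cons b (Fin.cons vy Z) : Fin (c+2) → Fin (c+2) → ℝ) 0 wrow
        = Fin.cons wrow (Fin.cons vy Z) := fun b wrow => Fin.update_cons_zero ..
  have hupd2 : ∀ u b wrow : Fin (c+2) → ℝ,
      Function.update (Fin.cons u (Fin.cons b Z) : Fin (c+2) → Fin (c+2) → ℝ)
        1 wrow = Fin.cons u (Fin.cons wrow Z) := by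
    intro u b wrow
    rw [show (1 : Fin (c+2)) = (0 : Fin (c+1)).succ from rfl, ← Fin.cons_update,
      Fin.update_cons_zero]
  have h2 : ∀ u : Fin (c+2) → ℝ,
      f (Fin.cons u (Fin.cons vy Z))
        = ∑ l, vy l * f (Fin.cons u (Fin.cons (es l) Z)) := by
    intro u
    have hv : vy = ∑ l, vy l • es l := pi_eq_sum_univ vy
    calc f (Fin.cons u (Fin.cons vy Z))
        = f (Function.update (Fin.cons u (Fin.cons vy Z) : Fin (c+2) → Fin (c+2) → ℝ)
            1 (∑ l, vy l • es l)) := by rw [hupd2, ← hv]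
      _ = ∑ l, f (Function.update (Fin.cons u (Fin.cons vy Z) : Fin (c+2) → Fin (c+2) → ℝ)
            1 (vy l • es l)) := f.map_update_sum _ _ _ _
      _ = ∑ l, vy l * f (Fin.cons u (Fin.cons (es l) Z)) := by
          refine Finset.sum_congr rfl fun l _ => ?_
          rw [hupd2, show (Fin.cons u (Fin.cons (vy l • es l) Z) : Fin (c+2) → Fin (c+2) → ℝ)
              = Function.update (Fin.cons u (Fin.cons (es l) Z)) 1 (vy l • es l) from
              (hupd2 _ _ _).symm,
            f.map_update_smul _ 1 (vy l) (es l), hupd2, smul_eq_mul]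
  have h1 : f (Fin.cons vx (Fin.cons vy Z))
      = ∑ k, vx k * f (Fin.cons (es k) (Fin.cons vy Z)) := by
    have hv : vx = ∑ k, vx k • es k := pi_eq_sum_univ vx
    calc f (Fin.cons vx (Fin.cons vy Z))
        = f (Function.update (Fin.cons vx (Fin.cons vy Z) : Fin (c+2) → Fin (c+2) → ℝ)
            0 (∑ k, vx k • es k)) := by rw [hupd1, ← hv]
      _ = ∑ k, f (Function.update (Fin.cons vx (Fin.cons vy Z) : Fin (c+2) → Fin (c+2) → ℝ)
            0 (vx k • es k)) := f.map_update_sum _ _ _ _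
      _ = ∑ k, vx k * f (Fin.cons (es k) (Fin.cons vy Z)) := by
          refine Finset.sum_congr rfl fun k _ => ?_
          rw [hupd1, show (Fin.cons (vx k • es k) (Fin.cons vy Z) : Fin (c+2) → Fin (c+2) → ℝ)
              = Function.update (Fin.cons (es k) (Fin.cons vy Z)) 0 (vx k • es k) from
              (hupd1 _ _).symm,
            f.map_update_smul _ 0 (vx k) (es k), hupd1, smul_eq_mul]
  rw [hdet, h1]
  refine Finset.sum_congr rfl fun k _ => ?_
  rw [h2]
  rw [Finset.mul_sum]
  refine Finset.sum_congr rfl fun l _ => ?_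
  rw [hdet]
  ring

/-- swapping the first two rows negates the determinant -/
lemma det_cons_swap {c : ℕ} (u w : Fin (c+2) → ℝ) (Z : Fin c → Fin (c+2) → ℝ) :
    (Matrix.of (Fin.cons w (Fin.cons u Z))).det
      = -(Matrix.of (Fin.cons u (Fin.cons w Z))).det := by
  have hperm := Matrix.det_permute (Equiv.swap (0 : Fin (c+2)) 1)
    (Matrix.of (Fin.cons u (Fin.cons w Z)))
  have hrows : ((Matrix.of (Fin.cons u (Fin.cons w Z))).submatrix
      (Equiv.swap (0 : Fin (c+2)) 1) id)
      = Matrix.of (Fin.cons w (Fin.cons u Z)) := by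
    ext i j
    refine Fin.cases ?_ (fun i' => ?_) i
    · show (Fin.cons u (Fin.cons w Z) : Fin (c+2) → Fin (c+2) → ℝ) (Equiv.swap (0 : Fin (c+2)) 1 0) j
          = (Fin.cons w (Fin.cons u Z) : Fin (c+2) → Fin (c+2) → ℝ) 0 j
      rw [Equiv.swap_apply_left,
        show (1 : Fin (c+2)) = (0 : Fin (c+1)).succ from rfl, Fin.cons_succ,
        Fin.cons_zero, Fin.cons_zero]
    · refine Fin.cases ?_ (fun i'' => ?_) i'
      · show (Fin.cons u (Fin.cons w Z) : Fin (c+2) → Fin (c+2) → ℝ) (Equiv.swap (0 : Fin (c+2)) 1 ((0 : Fin (c+1)).succ)) j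
            = (Fin.cons w (Fin.cons u Z) : Fin (c+2) → Fin (c+2) → ℝ) ((0 : Fin (c+1)).succ) j
        rw [show ((0 : Fin (c+1)).succ) = (1 : Fin (c+2)) from rfl, Equiv.swap_apply_right,
          show (1 : Fin (c+2)) = (0 : Fin (c+1)).succ from rfl, Fin.cons_succ, Fin.cons_zero,
          Fin.cons_zero]
      · have hne0 : (i''.succ.succ : Fin (c+2)) ≠ 0 := Fin.succ_ne_zero _
        have hne1 : (i''.succ.succ : Fin (c+2)) ≠ 1 := by
          rw [show (1 : Fin (c+2)) = (0 : Fin (c+1)).succ from rfl]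
          exact fun hcon => Fin.succ_ne_zero _ (Fin.succ_injective _ hcon)
        show (Fin.cons u (Fin.cons w Z) : Fin (c+2) → Fin (c+2) → ℝ) (Equiv.swap (0 : Fin (c+2)) 1 i''.succ.succ) j
            = (Fin.cons w (Fin.cons u Z) : Fin (c+2) → Fin (c+2) → ℝ) i''.succ.succ j
        rw [Equiv.swap_apply_of_ne_of_ne hne0 hne1, Fin.cons_succ, Fin.cons_succ,
          Fin.cons_succ, Fin.cons_succ]
  rw [hrows] at hperm
  rw [hperm]
  simp




lemma card_ltPairs (N : ℕ) :
    Fintype.card {p : Fin N × Fin N // p.1 < p.2} = N.choose 2 := by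
  have e : {p : Fin N × Fin N // p.1 < p.2} ≃ Σ l : Fin N, Fin l.1 :=
    { toFun := fun p => ⟨p.1.2, ⟨p.1.1.1, p.2⟩⟩
      invFun := fun q => ⟨(⟨q.2.1, q.2.2.trans q.1.2⟩, q.1), q.2.2⟩
      left_inv := fun p => rfl
      right_inv := fun q => rfl }
  rw [Fintype.card_congr e, Fintype.card_sigma]
  simp only [Fintype.card_fin]
  rw [Fin.sum_univ_eq_sum_range (fun i => i) N, Nat.choose_two_right]
  have := Finset.sum_range_id_mul_two N
  omega

lemma cons_cons_injective {α : Type*} {c : ℕ} {x y : α} {z : Fin c → α}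
    (hxy : x ≠ y) (hxz : ∀ k, x ≠ z k) (hyz : ∀ k, y ≠ z k) (hz : Function.Injective z) :
    Function.Injective (Fin.cons x (Fin.cons y z) : Fin (c+2) → α) := by
  apply Fin.cons_injective_of_injective
  · intro hmem
    rw [Fin.range_cons, Set.mem_insert_iff] at hmem
    rcases hmem with h | ⟨k, hk⟩
    · exact hxy h
    · exact hxz k hk.symm
  · apply Fin.cons_injective_of_injective
    · intro hmem
      rcases hmem with ⟨k, hk⟩
      exact hyz k hk.symm
    · exact hz


lemma frankl_bound {Q : Type*} [Fintype Q] [DecidableEq Q] {n m : ℕ}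
    (hn : Fintype.card Q = n) {t : ℕ}
    (Ms Rs : Fin t → Finset Q) (hMc : ∀ i, (Ms i).card = m) (hRc : ∀ i, (Rs i).card = 2)
    (hsub : ∀ i, Rs i ⊆ Ms i) (hskew : ∀ i j : Fin t, j < i → ¬ Rs i ⊆ Ms j) :
    t ≤ (n - m + 2).choose 2 := by
  classical
  set c := n - m with hc
  set a : Q → ℝ := fun q => ((Fintype.equivFin Q q : ℕ) : ℝ) with ha
  have hainj : Function.Injective a := by
    intro q q' hqq
    have h1 : ((Fintype.equivFin Q q : ℕ) : ℝ) = ((Fintype.equivFin Q q' : ℕ) : ℝ) := hqq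
    exact (Fintype.equivFin Q).injective (Fin.ext (Nat.cast_injective h1))
  have hxy : ∀ i, ∃ x y : Q, x ≠ y ∧ Rs i = {x, y} := fun i => Finset.card_eq_two.mp (hRc i)
  choose x y hxyne hRseq using hxy
  have hxmem : ∀ i, x i ∈ Ms i := fun i =>
    hsub i (by rw [hRseq i]; exact Finset.mem_insert_self _ _)
  have hymem : ∀ i, y i ∈ Ms i := fun i =>
    hsub i (by rw [hRseq i]; exact Finset.mem_insert_of_mem (Finset.mem_singleton_self _))
  have hcompl : ∀ j, ((Ms j)ᶜ : Finset Q).card = c := by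
    intro j; rw [Finset.card_compl, hMc, hn]
  have hzex : ∀ j, ∃ z : Fin c → Q, Function.Injective z ∧ (∀ k, z k ∉ Ms j) ∧
      (∀ q, q ∉ Ms j → ∃ k, z k = q) := by
    intro j
    have e := Finset.equivFinOfCardEq (hcompl j)
    refine ⟨fun k => (e.symm k : Q), ?_, ?_, ?_⟩
    · intro k k' hkk
      exact e.symm.injective (Subtype.ext hkk)
    · intro k
      exact Finset.mem_compl.mp (e.symm k).2
    · intro q hq
      exact ⟨e ⟨q, Finset.mem_compl.mpr hq⟩, by simp⟩
  choose z hzinj hzmem hzsurj using hzex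
  set vrow : Q → Fin (c+2) → ℝ := fun q l => a q ^ (l : ℕ) with hvrow
  set Zr : Fin t → Fin c → Fin (c+2) → ℝ := fun j k => vrow (z j k) with hZr
  set d : Fin t → Fin t → ℝ := fun i j =>
    (Matrix.of (Fin.cons (vrow (x i)) (Fin.cons (vrow (y i)) (Zr j)))).det with hd
  have hvand : ∀ i j, Matrix.of (Fin.cons (vrow (x i)) (Fin.cons (vrow (y i)) (Zr j)))
      = Matrix.vandermonde (Fin.cons (a (x i)) (Fin.cons (a (y i)) (fun k => a (z j k)))) := by
    intro i j
    ext k l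
    refine Fin.cases ?_ (fun k' => ?_) k
    · simp [hvrow, Matrix.vandermonde_apply]
    · refine Fin.cases ?_ (fun k'' => ?_) k' <;>
        simp [hvrow, hZr, Matrix.vandermonde_apply, Fin.cons_succ]
  have hdiag : ∀ i, d i i ≠ 0 := by
    intro i
    show (Matrix.of (Fin.cons (vrow (x i)) (Fin.cons (vrow (y i)) (Zr i)))).det ≠ 0
    rw [hvand, Matrix.det_vandermonde_ne_zero_iff]
    have heq : (Fin.cons (a (x i)) (Fin.cons (a (y i)) (fun k => a (z i k))) : Fin (c+2) → ℝ)
        = a ∘ (Fin.cons (x i) (Fin.cons (y i) (z i))) := by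
      funext k
      refine Fin.cases rfl (fun k' => ?_) k
      refine Fin.cases ?_ (fun k'' => ?_) k' <;> simp [Fin.cons_succ]
    rw [heq]
    refine hainj.comp (cons_cons_injective (hxyne i) ?_ ?_ (hzinj i))
    · exact fun k hk => hzmem i k (hk ▸ hxmem i)
    · exact fun k hk => hzmem i k (hk ▸ hymem i)
  have hzero : ∀ i j, j < i → d i j = 0 := by
    intro i j hji
    show (Matrix.of (Fin.cons (vrow (x i)) (Fin.cons (vrow (y i)) (Zr j)))).det = 0
    rw [hvand, Matrix.det_vandermonde_eq_zero_iff]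
    obtain ⟨q, hqR, hqM⟩ := Finset.not_subset.mp (hskew i j hji)
    obtain ⟨k0, hk0⟩ := hzsurj j q hqM
    have hq : q = x i ∨ q = y i := by
      have h2 := hqR
      rw [hRseq i, Finset.mem_insert, Finset.mem_singleton] at h2
      exact h2
    rcases hq with hcase | hcase
    · refine ⟨0, k0.succ.succ, ?_, ?_⟩
      · simp [Fin.cons_zero, Fin.cons_succ, hk0, hcase]
      · exact (Fin.succ_ne_zero _).symm
    · refine ⟨(1 : Fin (c+2)), k0.succ.succ, ?_, ?_⟩
      · rw [show (1 : Fin (c+2)) = (0 : Fin (c+1)).succ from rfl]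
        simp [Fin.cons_zero, Fin.cons_succ, hk0, hcase]
      · rw [show (1 : Fin (c+2)) = (0 : Fin (c+1)).succ from rfl]
        intro hcon
        exact Fin.succ_ne_zero _ ((Fin.succ_injective _) hcon).symm
  set D : Fin t → Fin (c+2) → Fin (c+2) → ℝ := fun j k l =>
    (Matrix.of (Fin.cons (es k) (Fin.cons (es l) (Zr j)))).det with hD
  have hDdiag : ∀ j k, D j k k = 0 := by
    intro j k
    refine Matrix.det_zero_of_row_eq (i := 0) (j := 1) (Fin.ne_of_val_ne (by simp)) ?_
    show (Fin.cons (es k) (Fin.cons (es k) (Zr j)) : Fin (c+2) → Fin (c+2) → ℝ) 0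
        = (Fin.cons (es k) (Fin.cons (es k) (Zr j)) : Fin (c+2) → Fin (c+2) → ℝ) 1
    rw [show (1 : Fin (c+2)) = (0 : Fin (c+1)).succ from rfl, Fin.cons_zero, Fin.cons_succ,
      Fin.cons_zero]
  have hDswap : ∀ j k l, D j l k = - D j k l := fun j k l => det_cons_swap (es k) (es l) (Zr j)
  have hpair : ∀ i j, d i j = ∑ k, ∑ l, vrow (x i) k * vrow (y i) l * D j k l :=
    fun i j => det_expand_pair (vrow (x i)) (vrow (y i)) (Zr j)
  set u' : Fin t → {p : Fin (c+2) × Fin (c+2) // p.1 < p.2} → ℝ := fun i p =>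
    vrow (x i) p.1.1 * vrow (y i) p.1.2 - vrow (x i) p.1.2 * vrow (y i) p.1.1 with hu'
  have hud : ∀ i j, (∑ p : {p : Fin (c+2) × Fin (c+2) // p.1 < p.2},
      u' i p * D j p.1.1 p.1.2) = d i j := by
    intro i j
    rw [hpair i j, ← Finset.sum_product' Finset.univ Finset.univ
      (fun k l => vrow (x i) k * vrow (y i) l * D j k l)]
    rw [Finset.univ_product_univ]
    set F : Fin (c+2) × Fin (c+2) → ℝ := fun p =>
      vrow (x i) p.1 * vrow (y i) p.2 * D j p.1 p.2 with hF
    rw [← Finset.sum_filter_add_sum_filter_not Finset.univ (fun p => p.1 < p.2) F]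
    rw [← Finset.sum_filter_add_sum_filter_not
      (Finset.univ.filter (fun p : Fin (c+2) × Fin (c+2) => ¬ p.1 < p.2))
      (fun p => p.2 < p.1) F]
    have hdz : ∑ p ∈ (Finset.univ.filter
        (fun p : Fin (c+2) × Fin (c+2) => ¬ p.1 < p.2)).filter (fun p => ¬ p.2 < p.1), F p
        = 0 := by
      refine Finset.sum_eq_zero fun p hp => ?_
      simp only [Finset.mem_filter] at hp
      have hpp : p.1 = p.2 := le_antisymm (not_lt.mp hp.2) (not_lt.mp hp.1.2)
      show vrow (x i) p.1 * vrow (y i) p.2 * D j p.1 p.2 = 0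
      rw [← hpp, hDdiag, mul_zero]
    have hsw : ∑ p ∈ (Finset.univ.filter
        (fun p : Fin (c+2) × Fin (c+2) => ¬ p.1 < p.2)).filter (fun p => p.2 < p.1), F p
        = ∑ p ∈ Finset.univ.filter (fun p : Fin (c+2) × Fin (c+2) => p.1 < p.2),
            F (p.2, p.1) := by
      refine Finset.sum_nbij' (fun p => (p.2, p.1)) (fun p => (p.2, p.1)) ?_ ?_ ?_ ?_ ?_
      · intro p hp
        simp only [Finset.mem_filter, Finset.mem_univ, true_and] at hp ⊢
        exact hp.2
      · intro p hp
        simp only [Finset.mem_filter, Finset.mem_univ, true_and] at hp ⊢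
        exact ⟨asymm hp, hp⟩
      · intro p _; rfl
      · intro p _; rfl
      · intro p _; rfl
    rw [hdz, add_zero, hsw, ← Finset.sum_add_distrib]
    rw [Finset.sum_subtype (p := fun p : Fin (c+2) × Fin (c+2) => p.1 < p.2)
      (Finset.univ.filter (fun p : Fin (c+2) × Fin (c+2) => p.1 < p.2))
      (by intro p; simp) (fun p => F p + F (p.2, p.1))]
    refine Finset.sum_congr rfl fun p _ => ?_
    show u' i p * D j p.1.1 p.1.2 = F p.1 + F (p.1.2, p.1.1)
    rw [hu', hF]
    simp only
    rw [hDswap j p.1.1 p.1.2]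
    ring
  have hindep : LinearIndependent ℝ u' := by
    rw [Fintype.linearIndependent_iff]
    intro g hg
    have hcol : ∀ jj : Fin t, ∑ i, g i * d i jj = 0 := by
      intro jj
      have hpt : ∀ p : {p : Fin (c+2) × Fin (c+2) // p.1 < p.2}, ∑ i, g i * u' i p = 0 := by
        intro p
        have h3 := congrFun hg p
        simpa [Finset.sum_apply, Pi.smul_apply, smul_eq_mul] using h3
      calc ∑ i, g i * d i jj
          = ∑ i, g i * ∑ p : {p : Fin (c+2) × Fin (c+2) // p.1 < p.2},
              u' i p * D jj p.1.1 p.1.2 := by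
            exact Finset.sum_congr rfl fun i _ => by rw [hud]
        _ = ∑ i, ∑ p : {p : Fin (c+2) × Fin (c+2) // p.1 < p.2},
              g i * (u' i p * D jj p.1.1 p.1.2) := by
            exact Finset.sum_congr rfl fun i _ => Finset.mul_sum _ _ _
        _ = ∑ p : {p : Fin (c+2) × Fin (c+2) // p.1 < p.2}, ∑ i,
              g i * (u' i p * D jj p.1.1 p.1.2) := Finset.sum_comm
        _ = ∑ p : {p : Fin (c+2) × Fin (c+2) // p.1 < p.2},
              (∑ i, g i * u' i p) * D jj p.1.1 p.1.2 := by
            refine Finset.sum_congr rfl fun p _ => ?_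
            rw [Finset.sum_mul]
            exact Finset.sum_congr rfl fun i _ => by ring
        _ = 0 := by
            refine Finset.sum_eq_zero fun p _ => ?_
            rw [hpt p, zero_mul]
    intro i0
    have H : ∀ v : ℕ, ∀ jj : Fin t, jj.val = v → g jj = 0 := by
      intro v
      induction v using Nat.strong_induction_on with
      | _ v IH =>
        intro jj hjj
        have hcj := hcol jj
        rw [Finset.sum_eq_single jj] at hcj
        · rcases mul_eq_zero.mp hcj with h4 | h4
          · exact h4
          · exact absurd h4 (hdiag jj)
        · intro b _ hbne
          rcases lt_trichotomy b.val jj.val with hlt | heq | hgt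
          · rw [IH b.val (hjj ▸ hlt) b rfl, zero_mul]
          · exact absurd (Fin.ext heq) hbne
          · rw [hzero b jj (Fin.lt_def.mpr hgt), mul_zero]
        · intro habs
          exact absurd (Finset.mem_univ jj) habs
    exact H i0.val i0 rfl
  have hcard := hindep.fintype_card_le_finrank
  rwa [Fintype.card_fin, Module.finrank_fintype_fun_eq_card, card_ltPairs] at hcard

end PairsBoundAux

/-- Theorem 2: Let `P` be a set of compressible pairs of states of an automaton with `n` states,
`h` its synchronizing height and `p` the maximal length of an `m`-subset Frankl-Pin sequence
over `P`. Then every compressible `m`-subset `M` (`2 ≤ m ≤ n`) is compressed by a word of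
length at most `(n-m+2 choose 2) - p + h`. -/
theorem pairs_bound {Q σ : Type*} [Fintype Q] [DecidableEq Q] (δ : Q → σ → Q)
    (n : ℕ) (hn : Fintype.card Q = n)
    (P : Set (Finset Q))
    (hPpair : ∀ R ∈ P, R.card = 2)
    (hPcomp : ∀ R ∈ P, ∃ w : List σ,
      (R.image (fun q => w.foldl δ q)).card < R.card)
    (h p m : ℕ) (hm2 : 2 ≤ m) (hmn : m ≤ n)
    (hh : IsLeast {h' | ∀ R ∈ P, ∃ w : List σ, w.length ≤ h' ∧
      (R.image (fun q => w.foldl δ q)).card = 1} h)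
    (hp : IsGreatest {ℓ | ∃ M R : Fin ℓ → Finset Q,
      (∀ i, (M i).card = m) ∧ (∀ i, R i ∈ P) ∧ (∀ i, R i ⊆ M i) ∧
      ∀ i j : Fin ℓ, j < i → ¬ R i ⊆ M j} p)
    (M : Finset Q) (hM : M.card = m)
    (hMcomp : ∃ w : List σ, (M.image (fun q => w.foldl δ q)).card < M.card) :
    ∃ w : List σ, w.length ≤ (n - m + 2) * (n - m + 1) / 2 - p + h ∧
      (M.image (fun q => w.foldl δ q)).card < M.card := by
  classical
  set app : List σ → Q → Q := fun w q => w.foldl δ q with happ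
  have happend : ∀ (w1 w2 : List σ) (q : Q), app (w1 ++ w2) q = app w2 (app w1 q) := by
    intro w1 w2 q
    simp [happ, List.foldl_append]
  have himage : ∀ (w1 w2 : List σ),
      M.image (app (w1 ++ w2)) = (M.image (app w1)).image (app w2) := by
    intro w1 w2
    rw [Finset.image_image]
    exact Finset.image_congr fun q _ => happend w1 w2 q
  -- shortest compressing word
  set S : Set ℕ := {k | ∃ w : List σ, w.length = k ∧ (M.image (app w)).card < M.card}
    with hS
  have hSne : S.Nonempty := by
    obtain ⟨w, hw⟩ := hMcomp
    exact ⟨w.length, w, rfl, hw⟩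
  set t := sInf S with ht
  obtain ⟨w, hwlen, hwcomp⟩ := Nat.sInf_mem hSne
  have hmin : ∀ w' : List σ, (M.image (app w')).card < M.card → t ≤ w'.length :=
    fun w' hc => Nat.sInf_le ⟨w', rfl, hc⟩
  set Mi : ℕ → Finset Q := fun i => M.image (app (List.take i w)) with hMi
  -- collision lemma
  have hcoll : ∀ (s : Finset Q) (f : Q → Q) (x' y' : Q), x' ∈ s → y' ∈ s → x' ≠ y' →
      f x' = f y' → (s.image f).card < s.card := by
    intro s f x' y' hx hy hne hfe
    refine lt_of_le_of_ne Finset.card_image_le fun heq => hne ?_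
    exact Finset.injOn_of_card_image_eq heq (Finset.mem_coe.mpr hx) (Finset.mem_coe.mpr hy) hfe
  have hMicard : ∀ i, i < t → (Mi i).card = m := by
    intro i hi
    have hle : (Mi i).card ≤ M.card := Finset.card_image_le
    rcases eq_or_lt_of_le hle with heq | hlt
    · rw [heq, hM]
    · exfalso
      have h2 := hmin _ hlt
      rw [List.length_take, hwlen] at h2
      omega
  obtain ⟨x, hxM, y, hyM, hxyne, hxyeq⟩ :=
    Finset.exists_ne_map_eq_of_card_lt_of_maps_to hwcomp
      (fun a ha => Finset.mem_image_of_mem (app w) ha)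
  set X : ℕ → Q := fun i => app (List.take i w) x with hX
  set Y : ℕ → Q := fun i => app (List.take i w) y with hY
  have hXYd : ∀ i, app (List.drop i w) (X i) = app (List.drop i w) (Y i) := by
    intro i
    have h1 : app (List.take i w ++ List.drop i w) x
        = app (List.take i w ++ List.drop i w) y := by
      rw [List.take_append_drop]; exact hxyeq
    rw [happend, happend] at h1
    exact h1
  have hXY : ∀ i, i < t → X i ≠ Y i := by
    intro i hi hcon
    have h2 := hmin _ (hcoll M (app (List.take i w)) x y hxM hyM hxyne hcon)
    rw [List.length_take, hwlen] at h2
    omega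
  have hXmem : ∀ i, X i ∈ Mi i := fun i => Finset.mem_image_of_mem _ hxM
  have hYmem : ∀ i, Y i ∈ Mi i := fun i => Finset.mem_image_of_mem _ hyM
  have hskew3 : ∀ i j : ℕ, j < i → i < t → ¬ ({X i, Y i} : Finset Q) ⊆ Mi j := by
    intro i j hji hit hsubXY
    have hx' : X i ∈ Mi j := hsubXY (Finset.mem_insert_self _ _)
    have hy' : Y i ∈ Mi j := hsubXY (Finset.mem_insert_of_mem (Finset.mem_singleton_self _))
    have hlt := hcoll (Mi j) (app (List.drop i w)) (X i) (Y i) hx' hy' (hXY i hit) (hXYd i)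
    rw [hMicard j (lt_trans hji hit), ← hM] at hlt
    have hcomp' : (M.image (app (List.take j w ++ List.drop i w))).card < M.card := by
      rw [himage]; exact hlt
    have h2 := hmin _ hcomp'
    rw [List.length_append, List.length_take, List.length_drop, hwlen] at h2
    have hmin' : min j t = j := min_eq_left (le_of_lt (lt_trans hji hit))
    omega
  -- the first time a pair of P fits inside the image
  set J : Set ℕ := {i | i = t ∨ (i < t ∧ ∃ Rp ∈ P, Rp ⊆ Mi i)} with hJ
  have hJne : J.Nonempty := ⟨t, Or.inl rfl⟩
  set istar := sInf J with histar
  have histar_le : istar ≤ t := Nat.sInf_le (Or.inl rfl)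
  have hbefore : ∀ j, j < istar → ¬ ∃ Rp ∈ P, Rp ⊆ Mi j := by
    intro j hj hcon
    have hjJ : j ∈ J := Or.inr ⟨lt_of_lt_of_le hj histar_le, hcon⟩
    exact absurd (Nat.sInf_le hjJ) (not_le.mpr hj)
  -- t ≤ istar + h
  have hth : t ≤ istar + h := by
    rcases Nat.sInf_mem hJne with heq | ⟨hlt, Rp, hRpP, hRpsub⟩
    · omega
    · obtain ⟨x', y', hne', hRp'⟩ := Finset.card_eq_two.mp (hPpair Rp hRpP)
      obtain ⟨uw, hulen, huone⟩ := hh.1 Rp hRpP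
      obtain ⟨e, he⟩ := Finset.card_eq_one.mp huone
      have hIm : Rp.image (app uw) = {e} := he
      have hx'e : app uw x' = e := by
        have hmem : app uw x' ∈ Rp.image (app uw) :=
          Finset.mem_image_of_mem _ (by rw [hRp']; exact Finset.mem_insert_self _ _)
        rw [hIm] at hmem
        exact Finset.mem_singleton.mp hmem
      have hy'e : app uw y' = e := by
        have hmem : app uw y' ∈ Rp.image (app uw) :=
          Finset.mem_image_of_mem _
            (by rw [hRp']; exact Finset.mem_insert_of_mem (Finset.mem_singleton_self _))
        rw [hIm] at hmem
        exact Finset.mem_singleton.mp hmem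
      have hx'M : x' ∈ Mi istar := hRpsub (by rw [hRp']; exact Finset.mem_insert_self _ _)
      have hy'M : y' ∈ Mi istar :=
        hRpsub (by rw [hRp']; exact Finset.mem_insert_of_mem (Finset.mem_singleton_self _))
      have hlt2 := hcoll (Mi istar) (app uw) x' y' hx'M hy'M hne' (hx'e.trans hy'e.symm)
      rw [hMicard istar hlt, ← hM] at hlt2
      have hcomp' : (M.image (app (List.take istar w ++ uw))).card < M.card := by
        rw [himage]; exact hlt2
      have h2 := hmin _ hcomp'
      rw [List.length_append, List.length_take, hwlen] at h2
      have hmin' : min istar t = istar := min_eq_left (le_of_lt hlt)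
      omega
  -- Frankl-Pin sequence of length istar + p
  obtain ⟨N', S', hN'c, hS'P, hS'sub, hS'skew⟩ := hp.1
  have hfr : istar + p ≤ (n - m + 2).choose 2 := by
    set MM : Fin (istar + p) → Finset Q := fun k =>
      if hk : (k : ℕ) < istar then Mi k
      else N' ⟨(k : ℕ) - istar, by have := k.isLt; omega⟩ with hMM
    set RR : Fin (istar + p) → Finset Q := fun k =>
      if hk : (k : ℕ) < istar then ({X k, Y k} : Finset Q)
      else S' ⟨(k : ℕ) - istar, by have := k.isLt; omega⟩ with hRR
    refine PairsBoundAux.frankl_bound hn MM RR ?_ ?_ ?_ ?_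
    · intro k
      by_cases hk : (k : ℕ) < istar
      · rw [hMM]; simp only; rw [dif_pos hk]
        exact hMicard _ (lt_of_lt_of_le hk histar_le)
      · rw [hMM]; simp only; rw [dif_neg hk]
        exact hN'c _
    · intro k
      by_cases hk : (k : ℕ) < istar
      · rw [hRR]; simp only; rw [dif_pos hk]
        exact Finset.card_pair (hXY _ (lt_of_lt_of_le hk histar_le))
      · rw [hRR]; simp only; rw [dif_neg hk]
        exact hPpair _ (hS'P _)
    · intro k
      by_cases hk : (k : ℕ) < istar
      · rw [hRR, hMM]; simp only; rw [dif_pos hk, dif_pos hk]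
        rw [Finset.insert_subset_iff]
        exact ⟨hXmem _, Finset.singleton_subset_iff.mpr (hYmem _)⟩
      · rw [hRR, hMM]; simp only; rw [dif_neg hk, dif_neg hk]
        exact hS'sub _
    · intro i j hji
      have hjilt : (j : ℕ) < (i : ℕ) := hji
      by_cases hi : (i : ℕ) < istar <;> by_cases hj : (j : ℕ) < istar
      · rw [hRR, hMM]; simp only; rw [dif_pos hi, dif_pos hj]
        exact hskew3 _ _ hjilt (lt_of_lt_of_le hi histar_le)
      · omega
      · rw [hRR, hMM]; simp only; rw [dif_neg hi, dif_pos hj]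
        intro hsub
        exact hbefore j hj ⟨S' _, hS'P _, hsub⟩
      · rw [hRR, hMM]; simp only; rw [dif_neg hi, dif_neg hj]
        refine hS'skew _ _ ?_
        show ((⟨(j : ℕ) - istar, _⟩ : Fin p) : ℕ) < ((⟨(i : ℕ) - istar, _⟩ : Fin p) : ℕ)
        simp only
        omega
  -- conclude
  refine ⟨w, ?_, hwcomp⟩
  have hchoose : (n - m + 2).choose 2 = (n - m + 2) * (n - m + 1) / 2 := by
    have haux : n - m + 2 - 1 = n - m + 1 := by omega
    rw [Nat.choose_two_right, haux]
  rw [hwlen, ← hchoose]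
  omega
end

section
/- Let A = ⟨Q, Σ, δ⟩ be an n-state automaton of rank r (the minimal cardinality of Qw over all words w is r). For words w_1,...,w_k let P(w_1,...,w_k) be the set of pairs {x,y} with x ≠ y such that xw_i = yw_i for some i, and let p(k) be the maximum cardinality of P(w_1,...,w_k) over all choices of k words. Then for each 2 ≤ m ≤ r there exists a Frankl-Pin sequence of m-subsets of length p(⌊(r-m+3)/2⌋). -/
/-! Let `w₀` be a word of minimal rank `r`. Minimality forces every word to be injective on
the image `A = Q w₀`. List the pairs merged by `w₁, …, w_k` in increasing order of the first
index `j(T)` of a word merging `T`. For such a pair `T`, each `w_s` with `s ≥ j(T)` excludes at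
most `|T w_s|` elements `z ∈ A` with `z w_s ∈ T w_s`; this is `1` for `s = j(T)` and at most `2`
otherwise, so at least `r - (2k - 1) ≥ m - 2` elements of `A` survive. Adding `m - 2` of them to
`T` gives an `m`-set `M_T` in which `T` is the only pair merged by a word `w_s` with `s ≥ j(T)`,
and every later pair `T'` has `j(T') ≥ j(T)`, so `T' ⊄ M_T`. -/

open Finset

theorem Finset.exists_subset_forall_notMem_of_injOn {ι α β : Type*} (A : Finset α) (I : Finset ι)
    (g : ι → α → β) (F : ι → Finset β) (hg : ∀ i ∈ I, Set.InjOn (g i) A) :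
    ∃ Z ⊆ A, #A ≤ #Z + ∑ i ∈ I, #(F i) ∧ ∀ i ∈ I, ∀ z ∈ Z, g i z ∉ F i := by
  classical
  set Z := A.filter fun z => ∀ i ∈ I, g i z ∉ F i
  refine ⟨Z, filter_subset _ _, ?_, fun i hi z hz => (mem_filter.1 hz).2 i hi⟩
  have hbad : A \ Z ⊆ I.biUnion fun i => A.filter fun z => g i z ∈ F i := by
    intro z hz
    simp only [Z, mem_sdiff, mem_filter, not_and, not_forall, not_not] at hz
    obtain ⟨i, hi, hzi⟩ := hz.2 hz.1
    exact mem_biUnion.2 ⟨i, hi, mem_filter.2 ⟨hz.1, hzi⟩⟩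
  have hpreimage : ∀ i ∈ I, #(A.filter fun z => g i z ∈ F i) ≤ #(F i) := fun i hi =>
    card_le_card_of_injOn (g i) (fun z hz => (mem_filter.1 hz).2)
      ((hg i hi).mono (filter_subset _ _))
  calc #A ≤ #(A \ Z) + #Z := card_le_card_sdiff_add_card
    _ ≤ ∑ i ∈ I, #(F i) + #Z := by
      gcongr
      exact (card_le_card hbad).trans (card_biUnion_le.trans (sum_le_sum hpreimage))
    _ = _ := add_comm _ _

theorem sum_card_image_Ici_lt {α β : Type*} [DecidableEq β] {k : ℕ} (g : Fin k → α → β)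
    {T : Finset α} (hT : #T = 2) {j : Fin k} (hj : #(T.image (g j)) = 1) :
    ∑ s ∈ Ici j, #(T.image (g s)) < 2 * k :=
  calc ∑ s ∈ Ici j, #(T.image (g s)) < ∑ _s ∈ Ici j, 2 :=
        sum_lt_sum (fun _ _ => card_image_le.trans hT.le) ⟨j, mem_Ici.2 le_rfl, by omega⟩
    _ ≤ 2 * k := by simp only [sum_const, Fin.card_Ici, smul_eq_mul]; omega

theorem Finset.eq_of_card_image_eq_one_of_subset_union {α β : Type*} [DecidableEq α]
    [DecidableEq β] {g : α → β} {T Z T' : Finset α} (hZ : Set.InjOn g Z)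
    (hZT : ∀ z ∈ Z, g z ∉ T.image g) (hT : #T = 2) (hT' : #T' = 2) (hT'TZ : T' ⊆ T ∪ Z)
    (hmerge : #(T'.image g) = 1) : T' = T := by
  obtain ⟨a, b, hab, rfl⟩ := card_eq_two.1 hT'
  have hgab : g a = g b := by
    by_contra hne
    rw [image_insert, image_singleton, card_pair hne] at hmerge
    omega
  have mem_T : ∀ u ∈ T ∪ Z, ∀ v ∈ T ∪ Z, u ≠ v → g u = g v → u ∈ T := by
    intro u hu v hv huv hguv
    rcases mem_union.1 hu with huT | huZ
    · exact huT
    rcases mem_union.1 hv with hvT | hvZ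
    · exact absurd (hguv ▸ mem_image_of_mem g hvT) (hZT u huZ)
    · exact absurd (hZ huZ hvZ hguv) huv
  have ha := hT'TZ (mem_insert_self a {b})
  have hb := hT'TZ (mem_insert_of_mem (mem_singleton_self b))
  refine eq_of_subset_of_card_le (insert_subset_iff.2 ⟨?_, singleton_subset_iff.2 ?_⟩) (by omega)
  · exact mem_T a ha b hb hab hgab
  · exact mem_T b hb a ha hab.symm hgab.symm

theorem exists_card_eq_superset_unique_merged {α β : Type*} [DecidableEq α] [DecidableEq β]
    {k m : ℕ} {g : Fin k → α → β} {A : Finset α} (hA : ∀ s, Set.InjOn (g s) A)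
    (hm2 : 2 ≤ m) (hmA : m ≤ #A) (hk : 2 * k ≤ #A - m + 3) {T : Finset α} (hT : #T = 2)
    {j : Fin k} (hj : #(T.image (g j)) = 1) :
    ∃ M : Finset α, #M = m ∧ T ⊆ M ∧
      ∀ s, j ≤ s → ∀ T' ⊆ M, #T' = 2 → #(T'.image (g s)) = 1 → T' = T := by
  obtain ⟨Z, hZA, hZcard, hZavoid⟩ := A.exists_subset_forall_notMem_of_injOn (Ici j) g
    (fun s => T.image (g s)) fun s _ => hA s
  have hsum := sum_card_image_Ici_lt g hT hj
  obtain ⟨Z', hZ'Z, hZ'card⟩ := exists_subset_card_eq (s := Z) (n := m - 2) (by omega)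
  have hZ'avoid : ∀ s, j ≤ s → ∀ z ∈ Z', g s z ∉ T.image (g s) := fun s hs z hz =>
    hZavoid s (mem_Ici.2 hs) z (hZ'Z hz)
  have hdisj : Disjoint T Z' := disjoint_right.2 fun z hz hzT =>
    hZ'avoid j le_rfl z hz (mem_image_of_mem _ hzT)
  refine ⟨T ∪ Z', by rw [card_union_of_disjoint hdisj]; omega, subset_union_left,
    fun s hs T' hT'M hT' hmerge => ?_⟩
  exact eq_of_card_image_eq_one_of_subset_union ((hA s).mono (hZ'Z.trans hZA))
    (hZ'avoid s hs) hT hT' hT'M hmerge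

theorem Finset.exists_injective_monotone_enum {α β : Type*} [LinearOrder β] (P : Finset α)
    (κ : α → β) {n : ℕ} (hP : #P = n) :
    ∃ R : Fin n → α, Function.Injective R ∧ (∀ i, R i ∈ P) ∧ Monotone (κ ∘ R) := by
  subst hP
  set e := P.equivFin.symm
  set σ := Tuple.sort fun i => κ (e i)
  exact ⟨fun i => e (σ i), Subtype.val_injective.comp (e.injective.comp σ.injective),
    fun i => (e (σ i)).2, Tuple.monotone_sort fun i => κ (e i)⟩

theorem injOn_image_foldl_of_forall_card_le {Q σ : Type*} [Fintype Q] [DecidableEq Q]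
    (δ : Q → σ → Q) {w₀ : List σ}
    (hw₀ : ∀ w : List σ, #(univ.image fun q => w₀.foldl δ q) ≤ #(univ.image fun q => w.foldl δ q))
    (w : List σ) : Set.InjOn (fun q => w.foldl δ q) (univ.image fun q => w₀.foldl δ q) := by
  have himage : (univ.image fun q => w₀.foldl δ q).image (fun q => w.foldl δ q) =
      univ.image fun q => (w₀ ++ w).foldl δ q := by
    simp only [image_image, Function.comp_def, List.foldl_append]
  exact card_image_iff.1 (le_antisymm card_image_le (himage ▸ hw₀ (w₀ ++ w)))

theorem frankl_pin_seq_exists_general {Q σ : Type*} [Fintype Q] [DecidableEq Q] (δ : Q → σ → Q)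
    (r : ℕ)
    (hr : IsLeast {c | ∃ w : List σ, (Finset.univ.image (fun q => w.foldl δ q)).card = c} r)
    (m : ℕ) (hm2 : 2 ≤ m) (hmr : m ≤ r)
    (p : ℕ)
    (hp : IsGreatest {c | ∃ ws : Fin ((r - m + 3) / 2) → List σ,
        (Finset.univ.filter (fun R : Finset Q => R.card = 2 ∧
          ∃ i, (R.image (fun q => (ws i).foldl δ q)).card = 1)).card = c} p) :
    ∃ M R : Fin p → Finset Q, (∀ i, (M i).card = m) ∧ (∀ i, (R i).card = 2) ∧
      (∀ i, R i ⊆ M i) ∧ ∀ i j : Fin p, j < i → ¬ R i ⊆ M j := by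
  obtain ⟨w₀, hw₀⟩ := hr.1
  have hinj := injOn_image_foldl_of_forall_card_le δ (fun w => hw₀ ▸ hr.2 ⟨w, rfl⟩)
  obtain ⟨ws, hws⟩ := hp.1
  let mergers (T : Finset Q) := univ.filter fun i => #(T.image fun q => (ws i).foldl δ q) = 1
  obtain ⟨R, hRinj, hRP, hRmono⟩ :=
    exists_injective_monotone_enum _ (fun T => (mergers T).min) hws
  have hR (i : Fin p) : #(R i) = 2 ∧ ∃ j : Fin ((r - m + 3) / 2), (mergers (R i)).min = j ∧
      #((R i).image fun q => (ws j).foldl δ q) = 1 := by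
    obtain ⟨hcard, j, hj⟩ := (mem_filter.1 (hRP i)).2
    obtain ⟨j₀, hj₀⟩ := min_of_mem (s := mergers (R i)) (mem_filter.2 ⟨mem_univ j, hj⟩)
    exact ⟨hcard, j₀, hj₀, (mem_filter.1 (mem_of_min hj₀)).2⟩
  choose hRcard j hj hRj using hR
  have hM (i : Fin p) := exists_card_eq_superset_unique_merged (fun s => hinj (ws s)) hm2
    (hw₀ ▸ hmr) (by omega) (hRcard i) (hRj i)
  choose M hMcard hRM hMonly using hM
  refine ⟨M, R, hMcard, hRcard, hRM, fun i i' hi'i hsub => hRinj.ne hi'i.ne' ?_⟩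
  have hle : j i' ≤ j i := by simpa [hj] using hRmono hi'i.le
  exact hMonly i' (j i) hle (R i) hsub (hRcard i) (hRj i)

/-- Proposition 1: If `A` is an `n`-state automaton of rank `r`, then for each `2 ≤ m ≤ r`
there exists an `m`-subset Frankl-Pin sequence of length `p(⌊(r-m+3)/2⌋)`, where `p(k)` is
the maximal cardinality of the set `P(w₁,…,w_k)` of pairs merged by one of `k` words. -/
theorem frankl_pin_seq_exists {Q σ : Type*} [Fintype Q] [DecidableEq Q] (δ : Q → σ → Q)
    (n r : ℕ) (hn : Fintype.card Q = n)
    (hr : IsLeast {c | ∃ w : List σ, (Finset.univ.image (fun q => w.foldl δ q)).card = c} r)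
    (m : ℕ) (hm2 : 2 ≤ m) (hmr : m ≤ r)
    (p : ℕ)
    (hp : IsGreatest {c | ∃ ws : Fin ((r - m + 3) / 2) → List σ,
        (Finset.univ.filter (fun R : Finset Q => R.card = 2 ∧
          ∃ i, (R.image (fun q => (ws i).foldl δ q)).card = 1)).card = c} p) :
    ∃ M R : Fin p → Finset Q, (∀ i, (M i).card = m) ∧ (∀ i, (R i).card = 2) ∧
      (∀ i, R i ⊆ M i) ∧ ∀ i j : Fin p, j < i → ¬ R i ⊆ M j :=
  frankl_pin_seq_exists_general δ r hr m hm2 hmr p hp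
end

section
/- Let A be a unary automaton with n states, one letter a, and rank r. If c_1,...,c_r are the cardinalities of the equivalence classes of the relation q ~ p iff q·a^{n-r} = p·a^{n-r}, then the number of compressible pairs equals Σ_{i=1}^r c_i(c_i - 1)/2, and Σ_{i=1}^r c_i(c_i-1)/2 ≥ (n/2)(n/r - 1). -/
/-!
The images `f^[i](Q)` form a decreasing chain; once a step loses no state the chain is constant
from then on, so it loses at least one state per step until it reaches the rank `r`, which it
therefore does by step `n - r`. On the stable image `f` is a bijection, hence two states merge
under some power of `f` iff they merge under `f^[n - r]`: compressible pairs are exactly the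
pairs inside a fibre of `f^[n - r]`. The bound is Cauchy–Schwarz, `n² = (∑ cₜ)² ≤ r ∑ cₜ²`.
-/

open scoped Classical
open Finset

section Iterate

variable {α : Type*} [Fintype α] [DecidableEq α] (f : α → α)

theorem image_univ_iterate_succ (i : ℕ) :
    univ.image f^[i + 1] = (univ.image f^[i]).image f := by
  rw [image_image, Function.iterate_succ']

theorem image_univ_iterate_succ_subset (i : ℕ) : univ.image f^[i + 1] ⊆ univ.image f^[i] := by
  rw [Function.iterate_succ, ← image_image]
  exact image_subset_image (subset_univ _)

theorem antitone_image_univ_iterate : Antitone fun i => univ.image f^[i] :=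
  antitone_nat_of_succ_le (image_univ_iterate_succ_subset f)

theorem image_univ_iterate_eq_of_card_succ_eq {m : ℕ}
    (hm : #(univ.image f^[m + 1]) = #(univ.image f^[m])) {j : ℕ} (hj : m ≤ j) :
    univ.image f^[j] = univ.image f^[m] := by
  have hstep : univ.image f^[m + 1] = univ.image f^[m] :=
    eq_of_subset_of_card_le (image_univ_iterate_succ_subset f m) hm.ge
  induction j, hj using Nat.le_induction with
  | base => rfl
  | succ j _ ih => rw [image_univ_iterate_succ, ih, ← image_univ_iterate_succ, hstep]

theorem card_image_univ_iterate_le_max {r : ℕ}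
    (hr : IsLeast {c | ∃ i : ℕ, #(univ.image f^[i]) = c} r) (i : ℕ) :
    #(univ.image f^[i]) ≤ max r (Fintype.card α - i) := by
  obtain ⟨⟨i₀, hi₀⟩, hlow⟩ := hr
  induction i with
  | zero => simp
  | succ i ih =>
    have hsub := card_le_card (image_univ_iterate_succ_subset f i)
    by_cases hi : #(univ.image f^[i]) = r
    · omega
    · -- a step without loss of states would freeze the image above the rank forever
      have hdrop : #(univ.image f^[i + 1]) ≠ #(univ.image f^[i]) := by
        intro heq
        have hfar : #(univ.image f^[max i i₀]) ≤ #(univ.image f^[i₀]) :=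
          card_le_card (antitone_image_univ_iterate f (le_max_right i i₀))
        rw [image_univ_iterate_eq_of_card_succ_eq f heq (le_max_left i i₀), hi₀] at hfar
        exact hi (le_antisymm hfar (hlow ⟨i, rfl⟩))
      omega

theorem card_image_univ_iterate_card_sub_rank {r : ℕ}
    (hr : IsLeast {c | ∃ i : ℕ, #(univ.image f^[i]) = c} r) :
    #(univ.image f^[Fintype.card α - r]) = r := by
  have := card_image_univ_iterate_le_max f hr (Fintype.card α - r)
  have := hr.2 ⟨Fintype.card α - r, rfl⟩
  omega

theorem iterate_eq_of_iterate_eq {m : ℕ}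
    (hm : #(univ.image f^[m + 1]) = #(univ.image f^[m])) {i : ℕ} {p q : α}
    (h : f^[i] p = f^[i] q) : f^[m] p = f^[m] q := by
  have hmaps : Set.MapsTo f (univ.image f^[m]) (univ.image f^[m]) := fun x hx => by
    rw [mem_coe, ← image_univ_iterate_eq_of_card_succ_eq f hm m.le_succ,
      image_univ_iterate_succ]
    exact mem_image_of_mem f hx
  -- `f` maps the stable image onto itself, so it is injective there, and so are its iterates
  have hinj : Set.InjOn f (univ.image f^[m]) :=
    injOn_of_card_image_eq (by rwa [← image_univ_iterate_succ])
  have hmem (x : α) : f^[m] x ∈ (univ.image f^[m] : Set α) := mem_image_of_mem _ (mem_univ x)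
  rcases le_total i m with hle | hle
  · rw [← Nat.sub_add_cancel hle, Function.iterate_add_apply, h, ← Function.iterate_add_apply]
  · rw [← Nat.sub_add_cancel hle, Function.iterate_add_apply, Function.iterate_add_apply] at h
    exact hinj.iterate hmaps _ (hmem p) (hmem q) h

end Iterate

theorem card_image_eq_one_iff_of_nonempty {α β : Type*} [DecidableEq β] (g : α → β)
    {s : Finset α} (hs : s.Nonempty) :
    #(s.image g) = 1 ↔ ∀ x ∈ s, ∀ y ∈ s, g x = g y := by
  have hpos := (hs.image g).card_pos
  rw [show #(s.image g) = 1 ↔ #(s.image g) ≤ 1 by omega, card_le_one_iff]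
  simp only [mem_image, forall_exists_index, and_imp]
  exact ⟨fun h x hx y hy => h x hx rfl y hy rfl,
    fun h _ _ x hx hxa y hy hyb => hxa ▸ hyb ▸ h x hx y hy⟩

section Fibers

variable {α β : Type*} [Fintype α] [DecidableEq α] [DecidableEq β] (g : α → β)

theorem filter_card_two_image_eq_one :
    univ.filter (fun R : Finset α => #R = 2 ∧ #(R.image g) = 1) =
      (univ.image g).biUnion fun t => (univ.filter fun x => g x = t).powersetCard 2 := by
  ext R
  simp only [mem_filter, mem_univ, true_and, mem_biUnion, mem_image, mem_powersetCard,
    subset_iff]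
  constructor
  · rintro ⟨hR, hconst⟩
    obtain ⟨x, hx⟩ := card_pos.mp (hR ▸ two_pos : 0 < #R)
    rw [card_image_eq_one_iff_of_nonempty g ⟨x, hx⟩] at hconst
    exact ⟨g x, ⟨x, rfl⟩, fun y hy => hconst y hy x hx, hR⟩
  · rintro ⟨t, -, hfib, hR⟩
    obtain ⟨x, hx⟩ := card_pos.mp (hR ▸ two_pos : 0 < #R)
    refine ⟨hR, (card_image_eq_one_iff_of_nonempty g ⟨x, hx⟩).mpr fun y hy z hz => ?_⟩
    rw [hfib hy, hfib hz]

theorem card_filter_card_two_image_eq_one :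
    #(univ.filter fun R : Finset α => #R = 2 ∧ #(R.image g) = 1) =
      ∑ t ∈ univ.image g, (#(univ.filter fun x => g x = t)).choose 2 := by
  rw [filter_card_two_image_eq_one, card_biUnion]
  · simp only [card_powersetCard]
  · intro t _ u _ htu
    refine disjoint_left.mpr fun R hRt hRu => ?_
    rw [mem_powersetCard] at hRt hRu
    obtain ⟨x, hx⟩ := card_pos.mp (hRt.2 ▸ two_pos : 0 < #R)
    have hxt := hRt.1 hx
    have hxu := hRu.1 hx
    simp only [mem_filter] at hxt hxu
    exact htu (hxt.2.symm.trans hxu.2)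

end Fibers

theorem le_sum_mul_sub_one_div_two {ι K : Type*} [Field K] [LinearOrder K]
    [IsStrictOrderedRing K] (s : Finset ι) (c : ι → K) :
    (∑ i ∈ s, c i) / 2 * ((∑ i ∈ s, c i) / #s - 1) ≤ ∑ i ∈ s, c i * (c i - 1) / 2 := by
  rcases s.eq_empty_or_nonempty with rfl | hs
  · simp
  have hpos : (0 : K) < #s := by exact_mod_cast hs.card_pos
  have hcs : (∑ i ∈ s, c i) ^ 2 / #s ≤ ∑ i ∈ s, c i ^ 2 :=
    (div_le_iff₀' hpos).mpr sq_sum_le_card_mul_sum_sq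
  calc (∑ i ∈ s, c i) / 2 * ((∑ i ∈ s, c i) / #s - 1)
      = ((∑ i ∈ s, c i) ^ 2 / #s - ∑ i ∈ s, c i) / 2 := by ring
    _ ≤ (∑ i ∈ s, c i ^ 2 - ∑ i ∈ s, c i) / 2 := by gcongr
    _ = ∑ i ∈ s, c i * (c i - 1) / 2 := by
      rw [← sum_sub_distrib, sum_div]
      exact sum_congr rfl fun i _ => by ring

/-- For a unary automaton with `n` states and rank `r`, if `c_t` are the cardinalities of the
equivalence classes of the relation `q ~ p ↔ q·a^{n-r} = p·a^{n-r}` (the fibers of `f^[n-r]`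
over its image), then the number of compressible pairs equals `Σ c_t(c_t-1)/2`, and this sum
is at least `(n/2)(n/r - 1)`. -/
theorem unary_classes {Q : Type*} [Fintype Q] [DecidableEq Q] (f : Q → Q) (n r : ℕ)
    (hn : Fintype.card Q = n)
    (hr : IsLeast {c | ∃ i : ℕ, (Finset.univ.image (f^[i])).card = c} r) :
    let T : Finset Q := Finset.univ.image (f^[n - r])
    let c : Q → ℕ := fun t => (Finset.univ.filter (fun q => f^[n - r] q = t)).card
    let P : Finset (Finset Q) := Finset.univ.filter
      (fun R : Finset Q => R.card = 2 ∧ ∃ i : ℕ, (R.image (f^[i])).card = 1)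
    ((P.card : ℚ) = ∑ t ∈ T, (c t : ℚ) * ((c t : ℚ) - 1) / 2) ∧
    (∑ t ∈ T, (c t : ℚ) * ((c t : ℚ) - 1) / 2 ≥ (n / 2) * ((n : ℚ) / r - 1)) := by
  intro T c P
  subst hn
  have hT : #T = r := card_image_univ_iterate_card_sub_rank f hr
  have hstable : #(univ.image f^[Fintype.card Q - r + 1]) = #T :=
    le_antisymm (card_le_card (image_univ_iterate_succ_subset f _)) (hT ▸ hr.2 ⟨_, rfl⟩)
  have hP :
      P = univ.filter fun R : Finset Q => #R = 2 ∧ #(R.image f^[Fintype.card Q - r]) = 1 := by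
    refine filter_congr fun R _ => and_congr_right fun hR => ?_
    have hne : R.Nonempty := card_pos.mp (by omega)
    simp only [card_image_eq_one_iff_of_nonempty _ hne]
    exact ⟨fun ⟨i, hi⟩ x hx y hy => iterate_eq_of_iterate_eq f hstable (hi x hx y hy),
      fun h => ⟨_, h⟩⟩
  have hsum : ∑ t ∈ T, (c t : ℚ) = Fintype.card Q := by
    rw [← card_univ, card_eq_sum_card_image f^[Fintype.card Q - r] univ]
    push_cast
    rfl
  refine ⟨?_, ?_⟩
  · rw [hP, card_filter_card_two_image_eq_one]
    push_cast [Nat.cast_choose_two]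
    rfl
  · simpa only [hsum, hT, ge_iff_le] using le_sum_mul_sub_one_div_two T fun t => (c t : ℚ)
end

section
/- Let A be a synchronizing one-cluster automaton with letter a, level ℓ ≥ 0, and cycle C ⊆ Q of length m > 1. Let S ⊆ C with |S| = k > 0. Then the sum over 0 ≤ j ≤ m-1 of the vectors a^{ℓ+j}·γ_S in ℚ^n equals the zero vector, where γ_S = [S]^T - (k/m)[Q]^T. -/
/-!
After `ℓ` steps every state lies on the cycle `C`, so for each state `q` the `m` states
`q·a^{ℓ+j}`, `0 ≤ j < m`, run through `C` exactly once. So each coordinate of the sum is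
`∑_{c ∈ C} γ c = k - m · (k / m) = 0`.
-/

open Finset

theorem Matrix.of_ite_apply_eq_mulVec {n R : Type*} [Fintype n] [DecidableEq n]
    [NonAssocSemiring R] (g : n → n) (v : n → R) :
    (Matrix.of fun q r : n => if g q = r then (1 : R) else 0).mulVec v = v ∘ g := by
  ext q
  simp [Matrix.mulVec, dotProduct]

theorem Finset.sum_ite_mem_sub_card_div_card {α K : Type*} [DecidableEq α] [Field K]
    [CharZero K] {S C : Finset α} (hS : S ⊆ C) :
    ∑ c ∈ C, ((if c ∈ S then (1 : K) else 0) - (#S : K) / #C) = 0 := by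
  rw [sum_sub_distrib, sum_ite_mem, inter_eq_right.mpr hS, sum_const, sum_const,
    nsmul_eq_mul, nsmul_eq_mul, mul_one]
  rcases C.eq_empty_or_nonempty with rfl | hC
  · simp [subset_empty.mp hS]
  · rw [mul_div_cancel₀ _ (Nat.cast_ne_zero.mpr hC.card_pos.ne'), sub_self]

section Orbit

variable {α : Type*} [DecidableEq α] {f : α → α} {C : Finset α} {m : ℕ}

theorem Finset.image_range_iterate_eq (hfC : Set.MapsTo f C C)
    (hcycle : ∀ q ∈ C, ∀ s ∈ C, ∃ j < m, f^[j] q = s) {p : α} (hp : p ∈ C) :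
    (range m).image (fun j => f^[j] p) = C := by
  apply Subset.antisymm
  · intro x hx
    obtain ⟨j, -, rfl⟩ := mem_image.mp hx
    exact hfC.iterate j hp
  · intro s hs
    obtain ⟨j, hj, rfl⟩ := hcycle p hp s hs
    exact mem_image_of_mem _ (mem_range.mpr hj)

theorem Finset.sum_range_iterate_eq_sum {M : Type*} [AddCommMonoid M] (hfC : Set.MapsTo f C C)
    (hcycle : ∀ q ∈ C, ∀ s ∈ C, ∃ j < m, f^[j] q = s) (hCm : #C = m) {p : α} (hp : p ∈ C)
    (g : α → M) :
    ∑ j ∈ range m, g (f^[j] p) = ∑ c ∈ C, g c := by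
  have himg := image_range_iterate_eq hfC hcycle hp
  have hinj : Set.InjOn (fun j => f^[j] p) (range m) :=
    card_image_iff.mp (by rw [himg, hCm, card_range])
  rw [← sum_image hinj, himg]

end Orbit

theorem one_cluster_sum_zero_general {Q : Type*} [Fintype Q] [DecidableEq Q]
    (f : Q → Q)
    (C : Finset Q) (ℓ m : ℕ) (hCm : C.card = m)
    (hCf : C.image f = C)
    (hcycle : ∀ q ∈ C, ∀ s ∈ C, ∃ j < m, f^[j] q = s)
    (hlevel : IsLeast {i : ℕ | Finset.univ.image (f^[i]) = C} ℓ)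
    (S : Finset Q) (hS : S ⊆ C) (k : ℕ) (hk : S.card = k)
    (γ : Q → ℚ)
    (hγ : γ = fun q => (if q ∈ S then (1 : ℚ) else 0) - (k : ℚ) / m) :
    ∑ j ∈ Finset.range m,
      (Matrix.of fun q r : Q => if f^[ℓ + j] q = r then (1 : ℚ) else 0).mulVec γ = 0 := by
  have hfC : Set.MapsTo f C C := fun p hp => hCf ▸ mem_image_of_mem f hp
  ext q
  have hqC : f^[ℓ] q ∈ C := hlevel.1 ▸ mem_image_of_mem _ (mem_univ q)
  calc (∑ j ∈ range m,
          (Matrix.of fun q r : Q => if f^[ℓ + j] q = r then (1 : ℚ) else 0).mulVec γ) q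
      = ∑ j ∈ range m, γ (f^[j] (f^[ℓ] q)) := by
        simp [Matrix.of_ite_apply_eq_mulVec, add_comm ℓ, Function.iterate_add_apply]
    _ = ∑ c ∈ C, γ c := sum_range_iterate_eq_sum hfC hcycle hCm hqC γ
    _ = 0 := by
        subst hγ hk hCm
        exact sum_ite_mem_sub_card_div_card (K := ℚ) hS

/-- Part of Lemma 1: in a synchronizing one-cluster automaton with letter `a` (acting as `f`),
level `ℓ` and cycle `C` of length `m > 1`, for any nonempty `S ⊆ C` of size `k` the sum
`∑_{j=0}^{m-1} a^{ℓ+j} γ_S` is the zero vector, where `γ_S = [S]^T - (k/m)[Q]^T`. -/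
theorem one_cluster_sum_zero {Q σ : Type*} [Fintype Q] [DecidableEq Q]
    (δ : Q → σ → Q) (a : σ) (f : Q → Q) (hf : f = fun q => δ q a)
    (hsync : ∃ w : List σ, (Finset.univ.image (fun q => w.foldl δ q)).card = 1)
    (C : Finset Q) (ℓ m : ℕ) (hm : 1 < m) (hCm : C.card = m)
    (hCf : C.image f = C)
    (hcycle : ∀ q ∈ C, ∀ s ∈ C, ∃ j < m, f^[j] q = s)
    (hlevel : IsLeast {i : ℕ | Finset.univ.image (f^[i]) = C} ℓ)
    (S : Finset Q) (hS : S ⊆ C) (k : ℕ) (hk : S.card = k) (hk0 : 0 < k)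
    (γ : Q → ℚ)
    (hγ : γ = fun q => (if q ∈ S then (1 : ℚ) else 0) - (k : ℚ) / m) :
    ∑ j ∈ Finset.range m,
      (Matrix.of fun q r : Q => if f^[ℓ + j] q = r then (1 : ℚ) else 0).mulVec γ = 0 :=
  one_cluster_sum_zero_general f C ℓ m hCm hCf hcycle hlevel S hS k hk γ hγ
end

section
/- Let A be a synchronizing one-cluster automaton with level ℓ, cycle C of length m > 1, and letter a. For S ⊆ C with |S| = k > 0, let W_S = Span{a^{ℓ+j}·γ_S : 0 ≤ j ≤ m-1} ⊆ ℚ^n. Then dim W_S ≥ D(m,k) - 1, where D(m,k) is the minimal dimension of the span of all cyclic shifts of a 0-1 vector in ℚ^m with exactly k ones. -/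
/-- Lemma 1: in a synchronizing one-cluster automaton with level `ℓ` and cycle `C` of length
`m > 1`, for `S ⊆ C` with `|S| = k > 0` the space `W_S = Span{a^{ℓ+j} γ_S : 0 ≤ j ≤ m-1}`
satisfies `dim W_S ≥ D(m,k) - 1`, where `D(m,k)` is the minimal dimension of the span of the
cyclic shifts of a 0-1 vector in `ℚ^m` with exactly `k` ones. -/
theorem one_cluster_dim {Q σ : Type*} [Fintype Q] [DecidableEq Q]
    (δ : Q → σ → Q) (a : σ) (f : Q → Q) (hf : f = fun q => δ q a)
    (hsync : ∃ w : List σ, (Finset.univ.image (fun q => w.foldl δ q)).card = 1)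
    (C : Finset Q) (ℓ m : ℕ) [NeZero m] (hm : 1 < m) (hCm : C.card = m)
    (hCf : C.image f = C)
    (hcycle : ∀ q ∈ C, ∀ s ∈ C, ∃ j < m, f^[j] q = s)
    (hlevel : IsLeast {i : ℕ | Finset.univ.image (f^[i]) = C} ℓ)
    (S : Finset Q) (hS : S ⊆ C) (k : ℕ) (hk : S.card = k) (hk0 : 0 < k)
    (γ : Q → ℚ)
    (hγ : γ = fun q => (if q ∈ S then (1 : ℚ) else 0) - (k : ℚ) / m)
    (D : ℕ)
    (hD : IsLeast {d | ∃ v : ZMod m → ℚ, (∀ i, v i = 0 ∨ v i = 1) ∧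
      (Finset.univ.filter (fun i => v i = 1)).card = k ∧
      Module.finrank ℚ (Submodule.span ℚ
        (Set.range (fun t : ZMod m => fun i : ZMod m => v (i + t)))) = d} D) :
    D - 1 ≤ Module.finrank ℚ (Submodule.span ℚ
      (Set.range (fun j : Fin m =>
        (Matrix.of fun q r : Q => if f^[ℓ + (j : ℕ)] q = r then (1 : ℚ) else 0).mulVec γ))) := by
  classical
  have hm0 : 0 < m := Nat.lt_of_lt_of_le Nat.one_pos hm.le
  -- a base point on the cycle
  have hC0 : C.Nonempty := by
    rw [← Finset.card_pos, hCm]; exact hm0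
  obtain ⟨q0, hq0⟩ := hC0
  -- f maps C into C
  have hfC : ∀ q ∈ C, f q ∈ C := by
    intro q hq
    rw [← hCf]; exact Finset.mem_image_of_mem f hq
  set g : ℕ → Q := fun i => f^[i] q0 with hg
  have hgsucc : ∀ i, g (i + 1) = f (g i) := by
    intro i; simp [hg, Function.iterate_succ_apply']
  have hgC : ∀ i, g i ∈ C := by
    intro i; induction i with
    | zero => simpa [hg] using hq0
    | succ n ih => rw [hgsucc]; exact hfC _ ih
  -- f is injective on C
  have hinj : Set.InjOn f (C : Set Q) := Finset.injOn_of_card_image_eq (by rw [hCf])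
  have hgsurj : ∀ s ∈ C, ∃ j < m, g j = s := fun s hs => hcycle q0 hq0 s hs
  -- the first m points of the orbit are pairwise distinct
  have hbij : Function.Bijective (fun j : Fin m => (⟨g j, hgC j⟩ : (C : Set Q))) := by
    rw [Fintype.bijective_iff_surjective_and_card]
    constructor
    · rintro ⟨s, hs⟩
      obtain ⟨j, hjm, hj⟩ := hgsurj s hs
      exact ⟨⟨j, hjm⟩, Subtype.ext hj⟩
    · simp [hCm]
  have hginj : ∀ i < m, ∀ j < m, g i = g j → i = j := by
    intro i hi j hj h
    have := hbij.1 (a₁ := ⟨i, hi⟩) (a₂ := ⟨j, hj⟩) (Subtype.ext h)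
    simpa using congrArg Fin.val this
  -- cancellation along the orbit
  have hcancel : ∀ t a b : ℕ, g (a + t) = g (b + t) → g a = g b := by
    intro t
    induction t with
    | zero => intro a b h; simpa using h
    | succ n ih =>
      intro a b h
      apply ih
      apply hinj (hgC (a + n)) (hgC (b + n))
      rw [← hgsucc, ← hgsucc]
      exact h
  -- period m
  have hgm : g m = q0 := by
    obtain ⟨j, hjm, hj⟩ := hgsurj (g m) (hgC m)
    rcases Nat.eq_zero_or_pos j with hj0 | hj0
    · subst hj0; simpa [hg] using hj.symm
    · exfalso
      have h1 : g ((m - j) + j) = g (0 + j) := by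
        rw [Nat.sub_add_cancel hjm.le, Nat.zero_add, hj]
      have h2 : g (m - j) = g 0 := hcancel j _ _ h1
      have := hginj (m - j) (by omega) 0 hm0 h2
      omega
  have hgit : ∀ a b : ℕ, f^[a] (g b) = g (a + b) := fun a b =>
    (Function.iterate_add_apply f a b q0).symm
  have hper : ∀ i, g (i + m) = g i := by
    intro i
    rw [← hgit i m, hgm]
  have hper' : ∀ t r : ℕ, g (r + t * m) = g r := by
    intro t
    induction t with
    | zero => intro r; simp
    | succ n ih =>
      intro r
      have : r + (n + 1) * m = (r + n * m) + m := by ring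
      rw [this, hper, ih]
  have hmod : ∀ i, g i = g (i % m) := by
    intro i
    conv_lhs => rw [← Nat.mod_add_div i m]
    rw [Nat.mul_comm, hper']
  have hkey : ∀ n : ℕ, g ((n : ZMod m)).val = g n := by
    intro n; rw [ZMod.val_natCast, ← hmod]
  -- the 0-1 vector on the cycle
  set v : ZMod m → ℚ := fun i => if g i.val ∈ S then 1 else 0 with hv
  have hv01 : ∀ i, v i = 0 ∨ v i = 1 := by
    intro i; by_cases h : g i.val ∈ S <;> simp [hv, h]
  have heinj : Function.Injective (fun i : ZMod m => g i.val) := by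
    intro i j h
    have h2 := hginj i.val (ZMod.val_lt i) j.val (ZMod.val_lt j) h
    exact ZMod.val_injective m h2
  have hvcard : (Finset.univ.filter fun i => v i = 1).card = k := by
    rw [← hk]
    apply Finset.card_bij (fun i _ => g i.val)
    · intro i hi
      simp only [hv, Finset.mem_filter] at hi
      by_contra h
      simp [h] at hi
    · intro i hi j hj h
      exact heinj h
    · intro s hs
      obtain ⟨j, hjm, hj⟩ := hgsurj s (hS hs)
      refine ⟨(j : ZMod m), ?_, ?_⟩
      · simp only [hv, Finset.mem_filter, Finset.mem_univ, true_and]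
        rw [hkey, hj]
        simp [hs]
      · rw [hkey, hj]
  -- the family in the goal
  set w : Fin m → (Q → ℚ) := fun j =>
    (Matrix.of fun q r : Q => if f^[ℓ + (j : ℕ)] q = r then (1 : ℚ) else 0).mulVec γ with hw
  have hwev : ∀ (j : Fin m) (q : Q), w j q = γ (f^[ℓ + (j : ℕ)] q) := by
    intro j q
    simp [hw, Matrix.mulVec, dotProduct, ite_mul, Finset.sum_ite_eq]
  -- restriction to the cycle, as a linear map
  set T : (Q → ℚ) →ₗ[ℚ] (ZMod m → ℚ) :=
    LinearMap.funLeft ℚ ℚ (fun i : ZMod m => g i.val) with hT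
  set c : ZMod m → (ZMod m → ℚ) := fun t => fun i => γ (g (i + t).val) with hc
  -- each cyclic shift of the cycle-restriction of γ is the restriction of some w j
  have hTw : ∀ t : ZMod m, ∃ j : Fin m, T (w j) = c t := by
    intro t
    set j : Fin m := ⟨(t - (ℓ : ZMod m)).val, ZMod.val_lt _⟩ with hj
    refine ⟨j, ?_⟩
    funext i
    have h1 : T (w j) i = w j (g i.val) := rfl
    have e1 : T (w j) i = γ (g (ℓ + (j : ℕ) + i.val)) := by
      rw [h1, hwev]
      congr 1
      exact hgit (ℓ + (j : ℕ)) i.val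
    have e2 : ((ℓ + (j : ℕ) + i.val : ℕ) : ZMod m) = i + t := by
      push_cast
      simp only [hj, ZMod.natCast_val, ZMod.cast_id]
      ring
    have e3 : c t i = γ (g (i + t).val) := rfl
    rw [e1, e3, ← hkey (ℓ + (j : ℕ) + i.val), e2]
  -- name the three spans
  set Wsp := Submodule.span ℚ (Set.range w) with hWsp
  set Csp := Submodule.span ℚ (Set.range c) with hCsp
  set Vsp := Submodule.span ℚ (Set.range (fun t : ZMod m => fun i : ZMod m => v (i + t))) with hVsp
  have h1 : D ≤ Module.finrank ℚ Vsp := hD.2 ⟨v, hv01, hvcard, rfl⟩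
  -- shift of v = shift of (γ on cycle) + constant
  have hone : (fun _ : ZMod m => (1 : ℚ)) ≠ 0 := by
    intro h
    have := congrFun h 0
    simp at this
  have h2 : Vsp ≤ Csp ⊔ Submodule.span ℚ {fun _ : ZMod m => (1 : ℚ)} := by
    rw [hVsp, Submodule.span_le]
    rintro x ⟨t, rfl⟩
    show (fun i : ZMod m => v (i + t)) ∈ (↑(Csp ⊔ Submodule.span ℚ {fun _ : ZMod m => (1 : ℚ)}) : Set (ZMod m → ℚ))
    have hx : (fun i : ZMod m => v (i + t)) = c t + ((k : ℚ) / m) • (fun _ : ZMod m => (1 : ℚ)) := by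
      funext i
      have hmem : g (i + t).val ∈ C := hgC _
      simp only [hv, hc, hγ, Pi.add_apply, Pi.smul_apply, smul_eq_mul, mul_one]
      ring
    rw [hx]
    exact SetLike.mem_coe.2 (Submodule.add_mem_sup
      (Submodule.subset_span ⟨t, rfl⟩)
      (Submodule.smul_mem _ _ (Submodule.subset_span rfl)))
  have h3 : Module.finrank ℚ Vsp ≤ Module.finrank ℚ Csp + 1 := by
    calc Module.finrank ℚ Vsp
        ≤ Module.finrank ℚ (Csp ⊔ Submodule.span ℚ {fun _ : ZMod m => (1 : ℚ)} : Submodule ℚ _) :=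
          Submodule.finrank_mono h2
      _ ≤ Module.finrank ℚ Csp
            + Module.finrank ℚ (Submodule.span ℚ {fun _ : ZMod m => (1 : ℚ)}) :=
          Submodule.finrank_add_le_finrank_add_finrank _ _
      _ = Module.finrank ℚ Csp + 1 := by rw [finrank_span_singleton hone]
  have h4 : Csp ≤ Wsp.map T := by
    rw [hCsp, Submodule.span_le]
    rintro x ⟨t, rfl⟩
    obtain ⟨j, hj⟩ := hTw t
    exact ⟨w j, Submodule.subset_span ⟨j, rfl⟩, hj⟩
  have h5 : Module.finrank ℚ Csp ≤ Module.finrank ℚ Wsp :=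
    le_trans (Submodule.finrank_mono h4) (Submodule.finrank_map_le T Wsp)
  omega
end

section
/- The dimension of the ℚ-vector space spanned by the m cyclic shifts of a vector (c_1,...,c_m) ∈ ℚ^m equals m - deg gcd(c_1 + c_2 x + ... + c_m x^{m-1}, x^m - 1), where the gcd is taken in ℚ[x]. -/
/-!
Identify `K^(ZMod m)` with `K[X]/(X^m - 1)` via `c ↦ ∑ cᵢ Xⁱ`. A cyclic shift of the coordinates
becomes multiplication by a power of `X`, so the span of the shifts of `c` is the principal ideal
generated by the image of its polynomial `f`, which is also generated by the image of
`g = gcd(f, X^m - 1)`. That ideal is the kernel of the projection `K[X]/(X^m - 1) → K[X]/(g)`,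
so by rank–nullity its dimension is `m - deg g`.
-/

open Polynomial Module

theorem Module.Basis.span_range_mul_eq_span_singleton {ι K A : Type*} [CommSemiring K]
    [Semiring A] [Algebra K A] (b : Basis ι K A) (y : A) :
    Submodule.span K (Set.range fun i => b i * y) = (Ideal.span {y}).restrictScalars K := by
  rw [show (fun i => b i * y) = LinearMap.mulRight K y ∘ b from rfl, Set.range_comp,
    ← Submodule.map_span, b.span_eq, Submodule.map_top]
  ext x
  simp [Ideal.mem_span_singleton', LinearMap.mem_range]

namespace AdjoinRoot

variable {K : Type*} [Field K]

theorem span_mk_eq_span_mk_gcd [DecidableEq K] (f w : K[X]) :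
    Ideal.span {mk w f} = Ideal.span {mk w (EuclideanDomain.gcd f w)} := by
  refine le_antisymm ?_ ?_ <;> rw [Ideal.span_singleton_le_span_singleton]
  · exact map_dvd _ (EuclideanDomain.gcd_dvd_left f w)
  · refine ⟨mk w (EuclideanDomain.gcdA f w), ?_⟩
    rw [EuclideanDomain.gcd_eq_gcd_ab f w, map_add, map_mul, map_mul, mk_self, zero_mul,
      add_zero]

theorem algHomOfDvd_mk {w g : K[X]} (hgw : g ∣ w) (p : K[X]) :
    algHomOfDvd K w g hgw (mk w p) = mk g p := by
  rw [← aeval_eq, ← aeval_eq, ← aeval_algHom_apply, algHomOfDvd_root]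

theorem ker_algHomOfDvd {w g : K[X]} (hgw : g ∣ w) :
    LinearMap.ker (algHomOfDvd K w g hgw).toLinearMap =
      (Ideal.span {mk w g}).restrictScalars K := by
  ext x
  obtain ⟨p, rfl⟩ := mk_surjective x
  rw [LinearMap.mem_ker, AlgHom.toLinearMap_apply, algHomOfDvd_mk, mk_eq_zero,
    Submodule.restrictScalars_mem, Ideal.mem_span_singleton]
  refine ⟨map_dvd (mk w), fun ⟨y, hy⟩ => ?_⟩
  obtain ⟨q, rfl⟩ := mk_surjective y
  rw [← map_mul, mk_eq_mk] at hy
  exact (dvd_sub_left (dvd_mul_right g q)).mp (hgw.trans hy)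

theorem finrank_span_mk_of_dvd {w g : K[X]} (hw : w ≠ 0) (hgw : g ∣ w) :
    finrank K ((Ideal.span {mk w g}).restrictScalars K) = w.natDegree - g.natDegree := by
  have hg : g ≠ 0 := ne_zero_of_dvd_ne_zero hw hgw
  have hsurj : Function.Surjective (algHomOfDvd K w g hgw) := fun y => by
    obtain ⟨p, rfl⟩ := mk_surjective y
    exact ⟨mk w p, algHomOfDvd_mk hgw p⟩
  have : FiniteDimensional K (AdjoinRoot w) := (powerBasis hw).finite
  have := (algHomOfDvd K w g hgw).toLinearMap.finrank_range_add_finrank_ker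
  rw [LinearMap.range_eq_top.mpr hsurj, finrank_top, ker_algHomOfDvd,
    (powerBasis hw).finrank, (powerBasis hg).finrank, powerBasis_dim, powerBasis_dim] at this
  omega

end AdjoinRoot

section Circulant

open AdjoinRoot

variable {K : Type*} [Field K] (m : ℕ)

theorem natDegree_X_pow_sub_one : (X ^ m - 1 : K[X]).natDegree = m := by
  simpa using natDegree_X_pow_sub_C (n := m) (r := (1 : K))

variable [NeZero m]

theorem X_pow_sub_one_ne_zero : (X ^ m - 1 : K[X]) ≠ 0 := by
  simpa using X_pow_sub_C_ne_zero (NeZero.pos m) (1 : K)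

theorem ZMod.finEquiv_symm_val (i : ZMod m) : ((ZMod.finEquiv m).symm i : ℕ) = i.val := by
  obtain ⟨n, rfl⟩ := Nat.exists_eq_succ_of_ne_zero (NeZero.ne m)
  rfl

noncomputable def cyclicBasis : Basis (ZMod m) K (AdjoinRoot (X ^ m - 1 : K[X])) :=
  (powerBasis (X_pow_sub_one_ne_zero m)).basis.reindex
    ((finCongr (by rw [powerBasis_dim, natDegree_X_pow_sub_one])).trans (ZMod.finEquiv m).toEquiv)

theorem cyclicBasis_apply (i : ZMod m) :
    cyclicBasis m i = root (X ^ m - 1 : K[X]) ^ i.val := by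
  rw [cyclicBasis, Basis.reindex_apply, PowerBasis.basis_eq_pow, powerBasis_gen]
  simp [ZMod.finEquiv_symm_val]

theorem root_pow_val_add (s t : ZMod m) :
    root (X ^ m - 1 : K[X]) ^ (s + t).val =
      root (X ^ m - 1 : K[X]) ^ s.val * root (X ^ m - 1 : K[X]) ^ t.val := by
  have h : root (X ^ m - 1 : K[X]) ^ m = 1 := by
    have h0 : mk (X ^ m - 1 : K[X]) (X ^ m - 1) = 0 := mk_self
    rwa [map_sub, map_pow, mk_X, map_one, sub_eq_zero] at h0
  rw [ZMod.val_add, ← pow_eq_pow_mod _ h, pow_add]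

noncomputable def cyclicEquiv : (ZMod m → K) ≃ₗ[K] AdjoinRoot (X ^ m - 1 : K[X]) :=
  (cyclicBasis m).equivFun.symm

theorem cyclicEquiv_apply (c : ZMod m → K) :
    cyclicEquiv m c = mk (X ^ m - 1) (∑ i : ZMod m, C (c i) * X ^ i.val) := by
  simp [cyclicEquiv, cyclicBasis_apply, Algebra.smul_def]

theorem cyclicEquiv_shift (c : ZMod m → K) (t : ZMod m) :
    cyclicEquiv m (fun i => c (i - t)) = root (X ^ m - 1 : K[X]) ^ t.val * cyclicEquiv m c := by
  simp only [cyclicEquiv, Basis.equivFun_symm_apply, Finset.mul_sum, mul_smul_comm]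
  refine Fintype.sum_equiv (Equiv.subRight t) _ _ fun i => ?_
  rw [Equiv.subRight_apply, cyclicBasis_apply, cyclicBasis_apply, ← root_pow_val_add,
    add_sub_cancel]

theorem map_cyclicEquiv_span_shifts (c : ZMod m → K) :
    (Submodule.span K (Set.range fun t : ZMod m => fun i => c (i + t))).map
      (cyclicEquiv (K := K) m).toLinearMap =
      (Ideal.span {mk (X ^ m - 1) (∑ i : ZMod m, C (c i) * X ^ i.val)}).restrictScalars K := by
  have hshifts : (Set.range fun t : ZMod m => fun i => c (i + t)) =
      Set.range fun t : ZMod m => fun i => c (i - t) := by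
    rw [← (Equiv.neg (ZMod m)).surjective.range_comp]
    simp [Function.comp_def, sub_eq_add_neg]
  rw [hshifts, Submodule.map_span, ← Set.range_comp]
  simp only [Function.comp_def, LinearEquiv.coe_coe, cyclicEquiv_shift, ← cyclicBasis_apply]
  rw [Basis.span_range_mul_eq_span_singleton, cyclicEquiv_apply]

end Circulant

/-- Ingleton's theorem: the dimension of the span of the `m` cyclic shifts of
`(c₁,…,c_m) ∈ ℚ^m` equals `m - deg gcd(c₁ + c₂x + … + c_m x^{m-1}, x^m - 1)` in `ℚ[x]`. -/
theorem ingleton_circulant_rank (m : ℕ) [NeZero m] (c : ZMod m → ℚ) :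
    Module.finrank ℚ (Submodule.span ℚ
      (Set.range (fun t : ZMod m => fun i : ZMod m => c (i + t)))) =
    m - (EuclideanDomain.gcd
          (∑ i : ZMod m, Polynomial.C (c i) * Polynomial.X ^ i.val)
          (Polynomial.X ^ m - 1) : Polynomial ℚ).natDegree := by
  rw [← LinearEquiv.finrank_map_eq (cyclicEquiv m), map_cyclicEquiv_span_shifts,
    AdjoinRoot.span_mk_eq_span_mk_gcd, AdjoinRoot.finrank_span_mk_of_dvd (X_pow_sub_one_ne_zero m)
    (EuclideanDomain.gcd_dvd_right _ _), natDegree_X_pow_sub_one]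
end

section
/- For a binary synchronizing automaton A with n states over alphabet {a,b}, if both transformations t_a and t_b induced by the letters satisfy t² = t or t² = id, then A has a reset word of length at most 2n - 2. -/
namespace BinIdemAux

/-- Alternating word of length `k` starting with letter `c`. -/
def alt : Bool → ℕ → List Bool
  | _, 0 => []
  | c, k+1 => c :: alt (!c) k

/-- The letter that extends `alt c k` to `alt c (k+1)`. -/
def altLast : Bool → ℕ → Bool
  | c, 0 => c
  | c, k+1 => altLast (!c) k

lemma alt_length (c : Bool) (k : ℕ) : (alt c k).length = k := by
  induction k generalizing c with
  | zero => rfl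
  | succ k ih => simp [alt, ih]

lemma alt_snoc (c : Bool) (k : ℕ) : alt c (k+1) = alt c k ++ [altLast c k] := by
  induction k generalizing c with
  | zero => rfl
  | succ k ih =>
    show c :: alt (!c) (k+1) = (c :: alt (!c) k) ++ [altLast (!c) k]
    rw [ih]
    rfl

lemma altLast_succ (c : Bool) (k : ℕ) : altLast c (k+1) = !(altLast c k) := by
  induction k generalizing c with
  | zero => rfl
  | succ k ih =>
    show altLast (!c) (k+1) = !(altLast (!c) k)
    exact ih (!c)

variable {Q : Type*} (δ : Q → Bool → Q)

lemma reduce (hletters : ∀ a : Bool, (∀ q, δ (δ q a) a = δ q a) ∨ (∀ q, δ (δ q a) a = q))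
    (w : List Bool) : ∃ c k, ∀ q, (alt c k).foldl δ q = w.foldl δ q := by
  induction w using List.reverseRecOn with
  | nil => exact ⟨false, 0, fun q => rfl⟩
  | append_singleton w d ih =>
    obtain ⟨c, k, hck⟩ := ih
    match k, hck with
    | 0, hck =>
      refine ⟨d, 1, fun q => ?_⟩
      simp only [List.foldl_append]
      rw [← hck q]
      rfl
    | (m+1), hck =>
      by_cases hd : d = altLast c (m+1)
      · refine ⟨c, m+2, fun q => ?_⟩
        rw [alt_snoc c (m+1), hd, List.foldl_append, List.foldl_append, hck q]
      · have hd2 : d = altLast c m := by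
          rw [altLast_succ] at hd
          cases d <;> cases hl : altLast c m <;> simp_all
        have key : ∀ q, (w ++ [d]).foldl δ q = δ (δ ((alt c m).foldl δ q) d) d := by
          intro q
          have h1 : (alt c (m+1)).foldl δ q = w.foldl δ q := hck q
          rw [alt_snoc, List.foldl_append] at h1
          simp only [List.foldl_cons, List.foldl_nil] at h1
          simp only [List.foldl_append, List.foldl_cons, List.foldl_nil]
          rw [← h1, hd2]
        rcases hletters d with hidem | hinv
        · refine ⟨c, m+1, fun q => ?_⟩
          rw [key q, hidem]
          rw [alt_snoc, List.foldl_append, ← hd2]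
          simp [List.foldl_cons]
        · refine ⟨c, m, fun q => ?_⟩
          rw [key q, hinv]

lemma foldl_alt_iterate (k : ℕ) (q : Q) :
    (alt false (2*k)).foldl δ q = (fun x => δ (δ x false) true)^[k] q := by
  induction k generalizing q with
  | zero => rfl
  | succ k ih =>
    have h2 : 2*(k+1) = 2*k+1+1 := by ring
    rw [h2]
    show (alt false (2*k+1+1)).foldl δ q = _
    simp only [alt, Bool.not_false, Bool.not_true, List.foldl_cons]
    rw [ih (δ (δ q false) true), Function.iterate_succ_apply]

lemma sing_prepend [Fintype Q] [DecidableEq Q] (hne : (Finset.univ : Finset Q).Nonempty)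
    (d : Bool) (w : List Bool)
    (hw : (Finset.univ.image (fun q => w.foldl δ q)).card = 1) :
    (Finset.univ.image (fun q => (d :: w).foldl δ q)).card = 1 := by
  have hsub : Finset.univ.image (fun q => (d :: w).foldl δ q) ⊆
      Finset.univ.image (fun q => w.foldl δ q) := by
    intro x hx
    simp only [Finset.mem_image] at hx ⊢
    obtain ⟨q, -, rfl⟩ := hx
    exact ⟨δ q d, Finset.mem_univ _, rfl⟩
  have h1 : 1 ≤ (Finset.univ.image (fun q => (d :: w).foldl δ q)).card :=
    Finset.card_pos.mpr (hne.image _)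
  have h2 := Finset.card_le_card hsub
  omega

lemma sing_append [Fintype Q] [DecidableEq Q] (hne : (Finset.univ : Finset Q).Nonempty)
    (d : Bool) (w : List Bool)
    (hw : (Finset.univ.image (fun q => w.foldl δ q)).card = 1) :
    (Finset.univ.image (fun q => (w ++ [d]).foldl δ q)).card = 1 := by
  obtain ⟨x, hx⟩ := Finset.card_eq_one.mp hw
  have hsub : Finset.univ.image (fun q => (w ++ [d]).foldl δ q) ⊆ {δ x d} := by
    intro y hy
    simp only [Finset.mem_image] at hy
    obtain ⟨q, -, rfl⟩ := hy
    have hmem : w.foldl δ q ∈ ({x} : Finset Q) := by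
      rw [← hx]
      exact Finset.mem_image_of_mem _ (Finset.mem_univ q)
    rw [Finset.mem_singleton] at hmem
    simp [List.foldl_append, hmem]
  have h1 : 1 ≤ (Finset.univ.image (fun q => (w ++ [d]).foldl δ q)).card :=
    Finset.card_pos.mpr (hne.image _)
  have h2 := Finset.card_le_card hsub
  simp only [Finset.card_singleton] at h2
  omega

lemma iterate_dec [Fintype Q] [DecidableEq Q] (f : Q → Q) (j : ℕ) :
    Finset.univ.image f^[j+1] ⊆ Finset.univ.image f^[j] := by
  intro x hx
  simp only [Finset.mem_image] at hx ⊢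
  obtain ⟨q, -, rfl⟩ := hx
  exact ⟨f q, Finset.mem_univ _, (Function.iterate_succ_apply f j q).symm⟩

lemma iterate_mono [Fintype Q] [DecidableEq Q] (f : Q → Q) (i m : ℕ) :
    Finset.univ.image f^[i+m] ⊆ Finset.univ.image f^[i] := by
  induction m with
  | zero => exact Finset.Subset.refl _
  | succ m ih => exact (iterate_dec f (i+m)).trans ih

lemma iterate_step [Fintype Q] [DecidableEq Q] (f : Q → Q) (j : ℕ) :
    Finset.univ.image f^[j+1] = (Finset.univ.image f^[j]).image f := by
  rw [Finset.image_image, Function.iterate_succ' f j]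

lemma iterate_stab [Fintype Q] [DecidableEq Q] (f : Q → Q) (k : ℕ)
    (h : Finset.univ.image f^[k] = Finset.univ.image f^[k+1]) (m : ℕ) :
    Finset.univ.image f^[k+m] = Finset.univ.image f^[k] := by
  induction m with
  | zero => rfl
  | succ m ih =>
    have e : k+(m+1) = (k+m)+1 := by ring
    rw [e, iterate_step, ih, ← iterate_step, ← h]

lemma iterate_bound [Fintype Q] [DecidableEq Q] (f : Q → Q)
    (hne : (Finset.univ : Finset Q).Nonempty)
    (hK : ∃ K, (Finset.univ.image f^[K]).card = 1) :
    (Finset.univ.image f^[Fintype.card Q - 1]).card = 1 := by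
  have hne_h : ∀ j, (Finset.univ.image f^[j]).Nonempty := fun j => hne.image _
  have main : ∀ k, (Finset.univ.image f^[k]).card = 1 ∨
      (Finset.univ.image f^[k]).card + k ≤ Fintype.card Q := by
    intro k
    induction k with
    | zero =>
      right
      simp [Function.iterate_zero, Finset.card_univ]
    | succ k ih =>
      rcases ih with h1 | h1
      · left
        have hle : (Finset.univ.image f^[k+1]).card ≤ 1 := by
          rw [iterate_step]
          exact (Finset.card_image_le).trans_eq h1
        have hge : 1 ≤ (Finset.univ.image f^[k+1]).card := Finset.card_pos.mpr (hne_h _)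
        omega
      · have hle := Finset.card_le_card (iterate_dec f k)
        rcases lt_or_eq_of_le hle with hlt | heqc
        · right; omega
        · have heq : Finset.univ.image f^[k+1] = Finset.univ.image f^[k] :=
            Finset.eq_of_subset_of_card_le (iterate_dec f k) (le_of_eq heqc.symm)
          obtain ⟨K, hK1⟩ := hK
          have hsub : Finset.univ.image f^[k] ⊆ Finset.univ.image f^[K] := by
            have e := iterate_stab f k heq.symm K
            rw [← e, Nat.add_comm]
            exact iterate_mono f K k
          have hle2 : (Finset.univ.image f^[k]).card ≤ 1 :=
            (Finset.card_le_card hsub).trans_eq hK1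
          have hge : 1 ≤ (Finset.univ.image f^[k]).card := Finset.card_pos.mpr (hne_h _)
          left
          rw [heq]
          omega
  have hn1 : 1 ≤ Fintype.card Q := Fintype.card_pos_iff.mpr ⟨hne.choose⟩
  rcases main (Fintype.card Q - 1) with h | h
  · exact h
  · have hge : 1 ≤ (Finset.univ.image f^[Fintype.card Q - 1]).card :=
      Finset.card_pos.mpr (hne_h _)
    omega

end BinIdemAux

open BinIdemAux in
/-- Proposition 2: if in a binary synchronizing automaton both letters induce transformations
`t` with `t² = t` or `t² = id`, then there is a reset word of length at most `2n - 2`. -/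
theorem binary_idempotent_bound {Q : Type*} [Fintype Q] [DecidableEq Q] (n : ℕ)
    (hn : Fintype.card Q = n) (δ : Q → Bool → Q)
    (hsync : ∃ w : List Bool, (Finset.univ.image (fun q => w.foldl δ q)).card = 1)
    (hletters : ∀ a : Bool, (∀ q, δ (δ q a) a = δ q a) ∨ (∀ q, δ (δ q a) a = q)) :
    ∃ w : List Bool, w.length ≤ 2 * n - 2 ∧
      (Finset.univ.image (fun q => w.foldl δ q)).card = 1 := by
  obtain ⟨w, hw⟩ := hsync
  have hne : (Finset.univ : Finset Q).Nonempty := by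
    have : (Finset.univ.image (fun q => w.foldl δ q)).Nonempty :=
      Finset.card_pos.mp (by omega)
    obtain ⟨x, hx⟩ := this
    obtain ⟨q, hq, -⟩ := Finset.mem_image.mp hx
    exact ⟨q, hq⟩
  -- reduce to an alternating word
  obtain ⟨c, k, hck⟩ := reduce δ hletters w
  have hck' : (Finset.univ.image (fun q => (alt c k).foldl δ q)).card = 1 := by
    have : (fun q => (alt c k).foldl δ q) = (fun q => w.foldl δ q) := funext hck
    rw [this]; exact hw
  -- make it start with `false`
  have hfalse : ∃ k', (Finset.univ.image (fun q => (alt false k').foldl δ q)).card = 1 := by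
    cases c with
    | false => exact ⟨k, hck'⟩
    | true =>
      refine ⟨k+1, ?_⟩
      have : alt false (k+1) = false :: alt true k := rfl
      rw [this]
      exact sing_prepend δ hne false (alt true k) hck'
  obtain ⟨k', hk'⟩ := hfalse
  -- make the length even
  have heven : ∃ K, (Finset.univ.image (fun q => (alt false (2*K)).foldl δ q)).card = 1 := by
    rcases Nat.even_or_odd k' with ⟨K, hKe⟩ | ⟨K, hKo⟩
    · exact ⟨K, by rw [two_mul, ← hKe]; exact hk'⟩
    · refine ⟨K+1, ?_⟩
      have h1 : 2*(K+1) = (2*K+1) + 1 := by ring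
      rw [h1, alt_snoc]
      apply sing_append δ hne
      rw [← hKo]
      exact hk'
  obtain ⟨K, hK⟩ := heven
  -- switch to iterates of ψ
  set ψ : Q → Q := fun x => δ (δ x false) true with hψ
  have hiter : ∀ m, (Finset.univ.image (fun q => (alt false (2*m)).foldl δ q)) =
      Finset.univ.image ψ^[m] := by
    intro m
    have : (fun q => (alt false (2*m)).foldl δ q) = ψ^[m] :=
      funext (fun q => foldl_alt_iterate δ m q)
    rw [this]
  have hKi : ∃ K, (Finset.univ.image ψ^[K]).card = 1 := ⟨K, by rw [← hiter]; exact hK⟩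
  have hfin := iterate_bound ψ hne hKi
  rw [hn] at hfin
  refine ⟨alt false (2*(n-1)), ?_, ?_⟩
  · rw [alt_length]
    have hn1 : 1 ≤ n := by
      have := Finset.card_pos.mpr hne
      rw [Finset.card_univ, hn] at this
      omega
    omega
  · rw [hiter (n-1)]
    exact hfin
end

section
/- Let A = ⟨Q, Σ, δ⟩ be a synchronizing automaton with n ≥ 5 states over a k-letter alphabet that is not strongly connected, and suppose every synchronizing k-ary automaton with m < n states has a reset word of length at most (m - 1)². Then A has a reset word of length at most n² - 4n + 5. -/
open Finset
open scoped Classical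

namespace NSCAux

variable {n k : ℕ}

lemma exists_const_of_card_one {α β : Type*} [Fintype α] [DecidableEq β] (f : α → β)
    (h : (Finset.univ.image f).card = 1) : ∃ c, ∀ a, f a = c := by
  obtain ⟨c, hc⟩ := Finset.card_eq_one.mp h
  refine ⟨c, fun a => ?_⟩
  have : f a ∈ Finset.univ.image f := Finset.mem_image_of_mem f (Finset.mem_univ a)
  rw [hc] at this
  simpa using this

lemma card_one_of_const {α β : Type*} [Fintype α] [Nonempty α] [DecidableEq β] (f : α → β)
    (c : β) (h : ∀ a, f a = c) : (Finset.univ.image f).card = 1 := by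
  have himg : Finset.univ.image f = {c} := by
    ext y
    simp only [Finset.mem_image, Finset.mem_univ, true_and, Finset.mem_singleton]
    constructor
    · rintro ⟨a, rfl⟩; exact (h a).symm ▸ rfl
    · rintro rfl; exact ⟨Classical.arbitrary α, h _⟩
  rw [himg, Finset.card_singleton]

lemma foldl_mem_closed (δ : Fin n → Fin k → Fin n) (X : Finset (Fin n))
    (hcl : ∀ q ∈ X, ∀ a, δ q a ∈ X) :
    ∀ (w : List (Fin k)) (q : Fin n), q ∈ X → w.foldl δ q ∈ X := by
  intro w
  induction w with
  | nil => intro q hq; simpa using hq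
  | cons a w ihw => intro q hq; exact ihw _ (hcl q hq a)

lemma distX_ex (δ : Fin n → Fin k → Fin n) (X : Finset (Fin n))
    (hreach : ∀ p : Fin n, ∃ w : List (Fin k), w.foldl δ p ∈ X) (p : Fin n) :
    ∃ l, ∃ w : List (Fin k), w.length = l ∧ w.foldl δ p ∈ X :=
  (hreach p).elim fun w hw => ⟨w.length, w, rfl, hw⟩

noncomputable def distX (δ : Fin n → Fin k → Fin n) (X : Finset (Fin n))
    (hreach : ∀ p : Fin n, ∃ w : List (Fin k), w.foldl δ p ∈ X) (p : Fin n) : ℕ :=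
  Nat.find (distX_ex δ X hreach p)

lemma distX_spec (δ : Fin n → Fin k → Fin n) (X : Finset (Fin n))
    (hreach : ∀ p : Fin n, ∃ w : List (Fin k), w.foldl δ p ∈ X) (p : Fin n) :
    ∃ w : List (Fin k), w.length = distX δ X hreach p ∧ w.foldl δ p ∈ X :=
  Nat.find_spec (distX_ex δ X hreach p)

lemma distX_le (δ : Fin n → Fin k → Fin n) (X : Finset (Fin n))
    (hreach : ∀ p : Fin n, ∃ w : List (Fin k), w.foldl δ p ∈ X) (p : Fin n)
    (w : List (Fin k)) (h : w.foldl δ p ∈ X) : distX δ X hreach p ≤ w.length :=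
  Nat.find_le (⟨w, rfl, h⟩ : ∃ w' : List (Fin k), w'.length = w.length ∧ w'.foldl δ p ∈ X)

lemma distX_pos (δ : Fin n → Fin k → Fin n) (X : Finset (Fin n))
    (hreach : ∀ p : Fin n, ∃ w : List (Fin k), w.foldl δ p ∈ X) (p : Fin n)
    (hp : p ∉ X) : 0 < distX δ X hreach p := by
  rcases Nat.eq_zero_or_pos (distX δ X hreach p) with h | h
  swap
  · exact h
  · exfalso
    obtain ⟨w, hwl, hwX⟩ := distX_spec δ X hreach p
    rw [h] at hwl
    rw [List.length_eq_zero_iff] at hwl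
    subst hwl
    exact hp (by simpa using hwX)

lemma distX_notmem (δ : Fin n → Fin k → Fin n) (X : Finset (Fin n))
    (hreach : ∀ p : Fin n, ∃ w : List (Fin k), w.foldl δ p ∈ X) (p : Fin n)
    (hp : 0 < distX δ X hreach p) : p ∉ X := by
  intro hmem
  have := distX_le δ X hreach p [] (by simpa using hmem)
  simp at this
  omega

lemma distX_take (δ : Fin n → Fin k → Fin n) (X : Finset (Fin n))
    (hreach : ∀ p : Fin n, ∃ w : List (Fin k), w.foldl δ p ∈ X) (p : Fin n)
    (w : List (Fin k)) (hw : w.foldl δ p ∈ X) (hlen : w.length = distX δ X hreach p)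
    (i : ℕ) (hi : i ≤ w.length) :
    distX δ X hreach ((w.take i).foldl δ p) = distX δ X hreach p - i := by
  apply le_antisymm
  · have key : (w.drop i).foldl δ ((w.take i).foldl δ p) = w.foldl δ p := by
      rw [← List.foldl_append, List.take_append_drop]
    have h1 := distX_le δ X hreach ((w.take i).foldl δ p) (w.drop i) (by rw [key]; exact hw)
    rw [List.length_drop] at h1
    omega
  · by_contra hlt
    push_neg at hlt
    obtain ⟨w', hw'len, hw'X⟩ := distX_spec δ X hreach ((w.take i).foldl δ p)
    have hmem : ((w.take i) ++ w').foldl δ p ∈ X := by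
      rw [List.foldl_append]; exact hw'X
    have h2 := distX_le δ X hreach p _ hmem
    rw [List.length_append, List.length_take] at h2
    omega

lemma step (δ : Fin n → Fin k → Fin n) (X : Finset (Fin n))
    (hcl : ∀ q ∈ X, ∀ a, δ q a ∈ X)
    (hreach : ∀ p : Fin n, ∃ w : List (Fin k), w.foldl δ p ∈ X)
    (S : Finset (Fin n)) (j : ℕ) (hcard : (S \ X).card = j + 1) :
    ∃ v : List (Fin k), v.length ≤ n - X.card - j ∧
      ((S.image fun q => v.foldl δ q) \ X).card ≤ j := by
  have hne : (S \ X).Nonempty := by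
    rw [← Finset.card_pos, hcard]; omega
  obtain ⟨p, hpS, hpmin⟩ := Finset.exists_min_image (S \ X) (distX δ X hreach) hne
  have hpX : p ∉ X := (Finset.mem_sdiff.mp hpS).2
  set d := distX δ X hreach p with hd
  have hdpos : 0 < d := distX_pos δ X hreach p hpX
  obtain ⟨w, hwlen, hwX⟩ := distX_spec δ X hreach p
  have hdisj : Disjoint X (S \ X) := Finset.disjoint_sdiff
  have hXScard : (X ∪ (S \ X)).card = X.card + (j + 1) := by
    rw [Finset.card_union_of_disjoint hdisj, hcard]
  have hXSle : X.card + (j + 1) ≤ n := by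
    have := Finset.card_le_card (Finset.subset_univ (X ∪ (S \ X)))
    rw [hXScard] at this
    simpa using this
  have hcount : d - 1 ≤ n - (X.card + (j + 1)) := by
    have hmaps : ∀ i ∈ Finset.Ioo 0 d, (w.take i).foldl δ p ∈ univ \ (X ∪ (S \ X)) := by
      intro i hi
      rw [Finset.mem_Ioo] at hi
      have hdist : distX δ X hreach ((w.take i).foldl δ p) = d - i :=
        distX_take δ X hreach p w hwX hwlen i (by omega)
      rw [Finset.mem_sdiff, Finset.mem_union]
      refine ⟨Finset.mem_univ _, ?_⟩
      rintro (hmem | hmem)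
      · have := distX_notmem δ X hreach _ (by rw [hdist]; omega)
        exact this hmem
      · have := hpmin _ hmem
        rw [hdist] at *
        omega
    have hinj : Set.InjOn (fun i => (w.take i).foldl δ p) (Finset.Ioo 0 d : Finset ℕ) := by
      intro i₁ h₁ i₂ h₂ heq
      rw [Finset.coe_Ioo, Set.mem_Ioo] at h₁ h₂
      have e₁ : distX δ X hreach ((w.take i₁).foldl δ p) = d - i₁ :=
        distX_take δ X hreach p w hwX hwlen i₁ (by omega)
      have e₂ : distX δ X hreach ((w.take i₂).foldl δ p) = d - i₂ :=
        distX_take δ X hreach p w hwX hwlen i₂ (by omega)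
      simp only at heq
      rw [heq, e₂] at e₁
      omega
    have := Finset.card_le_card_of_injOn _ hmaps hinj
    rw [Nat.card_Ioo, Finset.card_sdiff_of_subset (Finset.subset_univ _), hXScard] at this
    simpa using this
  have hdle : d ≤ n - X.card - j := by omega
  refine ⟨w, by omega, ?_⟩
  have hsub : (S.image fun q => w.foldl δ q) \ X ⊆ ((S \ X).erase p).image fun q => w.foldl δ q := by
    intro y hy
    rw [Finset.mem_sdiff, Finset.mem_image] at hy
    obtain ⟨⟨s, hsS, hsy⟩, hyX⟩ := hy
    rw [Finset.mem_image]
    refine ⟨s, ?_, hsy⟩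
    rw [Finset.mem_erase, Finset.mem_sdiff]
    constructor
    · rintro rfl
      exact hyX (hsy ▸ hwX)
    · refine ⟨hsS, fun hsX => hyX ?_⟩
      rw [← hsy]
      exact foldl_mem_closed δ X hcl w s hsX
  calc ((S.image fun q => w.foldl δ q) \ X).card
      ≤ (((S \ X).erase p).image fun q => w.foldl δ q).card := Finset.card_le_card hsub
    _ ≤ ((S \ X).erase p).card := Finset.card_image_le
    _ ≤ j := by rw [Finset.card_erase_of_mem hpS, hcard]; omega

lemma intoX (δ : Fin n → Fin k → Fin n) (X : Finset (Fin n))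
    (hcl : ∀ q ∈ X, ∀ a, δ q a ∈ X)
    (hreach : ∀ p : Fin n, ∃ w : List (Fin k), w.foldl δ p ∈ X) :
    ∀ (j : ℕ) (S : Finset (Fin n)), (S \ X).card ≤ j →
    ∃ v : List (Fin k), v.length ≤ ∑ i ∈ Finset.range j, (n - X.card - i) ∧
      ∀ s ∈ S, v.foldl δ s ∈ X := by
  intro j
  induction j with
  | zero =>
    intro S hS
    refine ⟨[], by simp, fun s hs => ?_⟩
    simp only [List.foldl_nil]
    by_contra hsX
    have hmem : s ∈ S \ X := Finset.mem_sdiff.mpr ⟨hs, hsX⟩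
    have := Finset.card_pos.mpr ⟨s, hmem⟩
    omega
  | succ j ihj =>
    intro S hS
    rcases Nat.lt_succ_iff_lt_or_eq.mp (Nat.lt_succ_of_le hS) with h | h
    · obtain ⟨v, hvl, hv⟩ := ihj S (by omega)
      refine ⟨v, ?_, hv⟩
      rw [Finset.sum_range_succ]
      omega
    · obtain ⟨v₁, hv₁l, hv₁⟩ := step δ X hcl hreach S j h
      obtain ⟨v₂, hv₂l, hv₂⟩ := ihj _ hv₁
      refine ⟨v₁ ++ v₂, ?_, fun s hs => ?_⟩
      · rw [List.length_append, Finset.sum_range_succ]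
        omega
      · rw [List.foldl_append]
        exact hv₂ _ (Finset.mem_image_of_mem _ hs)

lemma sum_tsub : ∀ t : ℕ, 2 * ∑ i ∈ Finset.range t, (t - i) = t * (t + 1) := by
  intro t
  induction t with
  | zero => simp
  | succ t iht =>
    have h : ∑ i ∈ Finset.range (t + 1), (t + 1 - i)
        = (∑ i ∈ Finset.range t, (t - i)) + (t + 1) := by
      rw [Finset.sum_range_succ]
      have h2 : ∑ i ∈ Finset.range t, (t + 1 - i) = ∑ i ∈ Finset.range t, ((t - i) + 1) :=
        Finset.sum_congr rfl (fun i hi => by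
          have := Finset.mem_range.mp hi; omega)
      rw [h2, Finset.sum_add_distrib]
      simp
      omega
    rw [h]
    ring_nf
    ring_nf at iht
    omega

lemma transfer (δ : Fin n → Fin k → Fin n) (X : Finset (Fin n))
    (δ' : Fin X.card → Fin k → Fin X.card)
    (hδ' : ∀ (i : Fin X.card) (a : Fin k),
      (X.equivFin.symm (δ' i a) : Fin n) = δ (X.equivFin.symm i) a) :
    ∀ (w : List (Fin k)) (i : Fin X.card),
      (X.equivFin.symm (w.foldl δ' i) : Fin n) = w.foldl δ (X.equivFin.symm i) := by
  intro w
  induction w with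
  | nil => intro i; rfl
  | cons a w ihw =>
    intro i
    simp only [List.foldl_cons]
    rw [ihw (δ' i a), hδ' i a]

end NSCAux

/-- Proposition 3: let `A` be a `k`-ary synchronizing automaton with `n ≥ 5` states that is
not strongly connected, and suppose the Černý conjecture holds for all `k`-ary automata with
fewer than `n` states. Then `A` has a reset word of length at most `n² - 4n + 5`. -/
theorem non_strongly_connected_bound (n k : ℕ) (hn5 : 5 ≤ n)
    (δ : Fin n → Fin k → Fin n)
    (hsync : ∃ w : List (Fin k), (Finset.univ.image (fun q => w.foldl δ q)).card = 1)
    (hnsc : ¬ ∀ p q : Fin n, ∃ w : List (Fin k), w.foldl δ p = q)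
    (ih : ∀ n' : ℕ, n' < n → ∀ δ' : Fin n' → Fin k → Fin n',
      (∃ w : List (Fin k), (Finset.univ.image (fun q => w.foldl δ' q)).card = 1) →
      ∃ w : List (Fin k), w.length ≤ (n' - 1) ^ 2 ∧
        (Finset.univ.image (fun q => w.foldl δ' q)).card = 1) :
    ∃ w : List (Fin k), w.length ≤ n ^ 2 - 4 * n + 5 ∧
      (Finset.univ.image (fun q => w.foldl δ q)).card = 1 := by
  classical
  obtain ⟨w, hw⟩ := hsync
  obtain ⟨q₀, hq₀⟩ := NSCAux.exists_const_of_card_one _ hw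
  have hq₀' : ∀ p : Fin n, w.foldl δ p = q₀ := hq₀
  -- the sink set X : states reachable from every state
  set X : Finset (Fin n) :=
    Finset.univ.filter (fun q => ∀ p, ∃ w' : List (Fin k), w'.foldl δ p = q) with hXdef
  have hmemX : ∀ q, q ∈ X ↔ ∀ p, ∃ w' : List (Fin k), w'.foldl δ p = q := by
    intro q; simp [hXdef]
  have hq₀X : q₀ ∈ X := (hmemX q₀).mpr (fun p => ⟨w, hq₀' p⟩)
  have hcl : ∀ q ∈ X, ∀ a, δ q a ∈ X := by
    intro q hq a
    rw [hmemX] at hq ⊢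
    intro p
    obtain ⟨w', hw'⟩ := hq p
    exact ⟨w' ++ [a], by rw [List.foldl_append, hw']; rfl⟩
  have hreach : ∀ p : Fin n, ∃ w' : List (Fin k), w'.foldl δ p ∈ X :=
    fun p => ⟨w, by rw [hq₀' p]; exact hq₀X⟩
  have hXne : X.Nonempty := ⟨q₀, hq₀X⟩
  have hm1 : 1 ≤ X.card := Finset.card_pos.mpr hXne
  have hXlt : X.card < n := by
    have hne_univ : X ≠ Finset.univ := by
      intro hX
      apply hnsc
      intro p q
      have hq : q ∈ X := hX ▸ Finset.mem_univ q
      exact (hmemX q).mp hq p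
    have := Finset.card_lt_card ((Finset.subset_univ X).ssubset_of_ne hne_univ)
    simpa using this
  -- a word mapping all states into X
  obtain ⟨u, hul, hu⟩ := NSCAux.intoX δ X hcl hreach (n - X.card) Finset.univ
    (by rw [Finset.card_sdiff_of_subset (Finset.subset_univ X), Finset.card_univ, Fintype.card_fin])
  have hsum := NSCAux.sum_tsub (n - X.card)
  have h2u : 2 * u.length ≤ (n - X.card) * ((n - X.card) + 1) := by
    rw [← hsum]; omega
  -- the restricted automaton on X
  have hδ'mem : ∀ (i : Fin X.card) (a : Fin k), δ (X.equivFin.symm i : Fin n) a ∈ X :=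
    fun i a => hcl _ (X.equivFin.symm i).2 a
  let δ' : Fin X.card → Fin k → Fin X.card :=
    fun i a => X.equivFin ⟨δ (X.equivFin.symm i : Fin n) a, hδ'mem i a⟩
  have hδ' : ∀ (i : Fin X.card) (a : Fin k),
      (X.equivFin.symm (δ' i a) : Fin n) = δ (X.equivFin.symm i) a := by
    intro i a
    show (X.equivFin.symm (X.equivFin ⟨δ (X.equivFin.symm i : Fin n) a, hδ'mem i a⟩) : Fin n) = _
    rw [Equiv.symm_apply_apply]
  have htrans := NSCAux.transfer δ X δ' hδ'
  haveI : Nonempty (Fin X.card) := ⟨⟨0, hm1⟩⟩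
  haveI : Nonempty (Fin n) := ⟨⟨0, by omega⟩⟩
  have hsync' : (Finset.univ.image (fun i => w.foldl δ' i)).card = 1 := by
    apply NSCAux.card_one_of_const _ (X.equivFin ⟨q₀, hq₀X⟩)
    intro i
    apply X.equivFin.symm.injective
    apply Subtype.coe_injective
    beta_reduce
    rw [htrans w i, Equiv.symm_apply_apply]
    exact hq₀' _
  obtain ⟨w₂, hw₂l, hw₂⟩ := ih X.card hXlt δ' ⟨w, hsync'⟩
  obtain ⟨c₂, hc₂⟩ := NSCAux.exists_const_of_card_one _ hw₂
  have hc₂' : ∀ i : Fin X.card, w₂.foldl δ' i = c₂ := hc₂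
  refine ⟨u ++ w₂, ?_, ?_⟩
  · -- length bound
    rw [List.length_append]
    obtain ⟨a, ha⟩ : ∃ a, X.card = a + 1 := ⟨X.card - 1, by omega⟩
    obtain ⟨b, hb⟩ : ∃ b, n - X.card = b + 1 := ⟨n - X.card - 1, by omega⟩
    have hn : n = a + b + 2 := by omega
    have hw₂l' : w₂.length ≤ a * a := by
      have he : (X.card - 1) ^ 2 = a * a := by rw [ha, Nat.add_sub_cancel, pow_two]
      rw [he] at hw₂l
      exact hw₂l
    have h2u' : 2 * u.length ≤ b * b + 3 * b + 2 := by
      rw [hb] at h2u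
      have he : (b + 1) * (b + 1 + 1) = b * b + 3 * b + 2 := by ring
      rw [he] at h2u
      exact h2u
    have hkey : 3 * b ≤ b * b + 4 * (a * b) := by
      rcases Nat.eq_zero_or_pos a with h0 | h0
      · subst h0
        have hb3 : 3 ≤ b := by omega
        nlinarith
      · have hab : b ≤ a * b := Nat.le_mul_of_pos_left b h0
        nlinarith
    have hfin : 2 * (u.length + w₂.length) ≤ 2 * (a * a) + 2 * (b * b) + 4 * (a * b) + 2 := by
      linarith [h2u', hw₂l', hkey]
    have h1 : n * n + 5 = 4 * n + (a * a + b * b + 2 * (a * b) + 1) := by rw [hn]; ring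
    rw [pow_two]
    obtain ⟨A, hA⟩ : ∃ A, a * a = A := ⟨_, rfl⟩
    obtain ⟨B, hB⟩ : ∃ B, b * b = B := ⟨_, rfl⟩
    obtain ⟨C, hC⟩ : ∃ C, a * b = C := ⟨_, rfl⟩
    obtain ⟨N, hN⟩ : ∃ N, n * n = N := ⟨_, rfl⟩
    rw [hA, hB, hC] at hfin h1
    rw [hN] at h1 ⊢
    omega
  · -- synchronization
    apply NSCAux.card_one_of_const _ (X.equivFin.symm c₂ : Fin n)
    intro p
    show (u ++ w₂).foldl δ p = _
    rw [List.foldl_append]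
    have hpu : u.foldl δ p ∈ X := hu p (Finset.mem_univ p)
    have h := htrans w₂ (X.equivFin ⟨u.foldl δ p, hpu⟩)
    rw [hc₂' (X.equivFin ⟨u.foldl δ p, hpu⟩), Equiv.symm_apply_apply] at h
    exact h.symm
end

section
/- Let A = ⟨Q, Σ, δ⟩ be a strongly connected synchronizing automaton with a twin pair x, y (for each letter a, either xa = ya or {xa, ya} ⊆ {x, y}). Let A' be the factor automaton obtained by identifying x and y into a single state z. Then A' is strongly connected and synchronizing, and if A has shortest reset length r, then the shortest reset length of A' is r - 1 or r. -/
lemma card_image_one_iff {α β : Type*} [Fintype α] [Nonempty α] [DecidableEq β]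
    (f : α → β) : (Finset.univ.image f).card = 1 ↔ ∃ c, ∀ q, f q = c := by
  rw [Finset.card_eq_one]
  constructor
  · rintro ⟨c, hc⟩
    refine ⟨c, fun q => ?_⟩
    have : f q ∈ Finset.univ.image f := Finset.mem_image_of_mem f (Finset.mem_univ q)
    rw [hc, Finset.mem_singleton] at this
    exact this
  · rintro ⟨c, hc⟩
    refine ⟨c, ?_⟩
    ext b
    simp only [Finset.mem_image, Finset.mem_univ, true_and, Finset.mem_singleton]
    constructor
    · rintro ⟨q, rfl⟩; exact hc q
    · rintro rfl; exact ⟨Classical.arbitrary α, hc _⟩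

/-- Proposition 4: if a strongly connected synchronizing automaton `A` has a twin pair `x, y`
and shortest reset length `r`, then the factor automaton `A'` obtained by identifying `x` and
`y` is strongly connected and synchronizing, and its shortest reset length is `r - 1` or `r`. -/
theorem twin_pair_factor {Q σ : Type*} [Fintype Q] [DecidableEq Q] (δ : Q → σ → Q)
    (x y : Q) (hxy : x ≠ y)
    (htwin : ∀ a : σ, δ x a = δ y a ∨ ({δ x a, δ y a} : Set Q) ⊆ {x, y})
    (hsc : ∀ p q : Q, ∃ w : List σ, w.foldl δ p = q)
    (r : ℕ)
    (hr : IsLeast {ℓ | ∃ w : List σ, w.length = ℓ ∧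
      (Finset.univ.image (fun q => w.foldl δ q)).card = 1} r) :
    let δ' : {q : Q // q ≠ y} → σ → {q : Q // q ≠ y} :=
      fun s a => if h : δ s.val a = y then ⟨x, hxy⟩ else ⟨δ s.val a, h⟩
    (∀ p q : {q : Q // q ≠ y}, ∃ w : List σ, w.foldl δ' p = q) ∧
    (∃ w : List σ, (Finset.univ.image (fun q => w.foldl δ' q)).card = 1) ∧
    (∃ r' : ℕ, IsLeast {ℓ | ∃ w : List σ, w.length = ℓ ∧
        (Finset.univ.image (fun q => w.foldl δ' q)).card = 1} r' ∧
      (r' = r - 1 ∨ r' = r)) := by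
  intro δ'
  haveI : Nonempty Q := ⟨x⟩
  haveI : Nonempty {q : Q // q ≠ y} := ⟨⟨x, hxy⟩⟩
  -- the projection
  set π : Q → {q : Q // q ≠ y} := fun q => if h : q = y then ⟨x, hxy⟩ else ⟨q, h⟩ with hπ
  have hπfix : ∀ s : {q : Q // q ≠ y}, π s.val = s := by
    rintro ⟨s, hs⟩
    simp [hπ, hs]
  have hstep : ∀ (q : Q) (a : σ), π (δ q a) = δ' (π q) a := by
    intro q a
    have hδ'' : ∀ (s : {q : Q // q ≠ y}) (a : σ),
        δ' s a = if h : δ s.val a = y then ⟨x, hxy⟩ else ⟨δ s.val a, h⟩ := fun _ _ => rfl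
    by_cases hq : q = y
    · have hπq : π q = ⟨x, hxy⟩ := by simp [hπ, hq]
      rw [hπq, hδ'']
      rcases htwin a with h | h
      · rw [hq, ← h]
      · have hxa := h (Set.mem_insert _ _)
        have hya := h (Set.mem_insert_iff.mpr (Or.inr rfl))
        simp only [Set.mem_insert_iff, Set.mem_singleton_iff] at hxa hya
        have h1 : π (δ q a) = ⟨x, hxy⟩ := by
          rw [hq]; rcases hya with h' | h' <;> simp [hπ, h', hxy]
        rw [h1]
        split
        · rfl
        · next hc =>
            simp only [Subtype.coe_mk] at hc
            rcases hxa with h' | h'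
            · exact Subtype.ext h'.symm
            · exact absurd h' hc
    · have hπq : π q = ⟨q, hq⟩ := by simp [hπ, hq]
      rw [hπq, hδ'']
  have hfold : ∀ (w : List σ) (q : Q), π (w.foldl δ q) = w.foldl δ' (π q) := by
    intro w
    induction w with
    | nil => intro q; rfl
    | cons a w ih => intro q; simp only [List.foldl_cons, ih, hstep]
  -- collapse letter
  have hcol : ∃ a : σ, δ x a = δ y a := by
    obtain ⟨w, -, hw⟩ := hr.1
    obtain ⟨c, hc⟩ := (card_image_one_iff _).mp hw
    have hwxy : w.foldl δ x = w.foldl δ y := (hc x).trans (hc y).symm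
    clear hc hw hr hsc
    induction w with
    | nil => exact absurd hwxy hxy
    | cons a w ih =>
      by_cases hd : δ x a = δ y a
      · exact ⟨a, hd⟩
      · rcases htwin a with h | h
        · exact ⟨a, h⟩
        · have hxa : δ x a ∈ ({x, y} : Set Q) := h (by left; rfl)
          have hya : δ y a ∈ ({x, y} : Set Q) := h (by right; rfl)
          simp only [List.foldl_cons] at hwxy
          apply ih
          rcases hxa with h1 | h1 <;> rcases hya with h2 | h2 <;>
            first
            | (exact absurd (h1.trans h2.symm) hd)
            | (rw [h1, h2] at hwxy; exact hwxy)
            | (rw [h1, h2] at hwxy; exact hwxy.symm)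
  -- strong connectivity of A'
  have sc' : ∀ p q : {q : Q // q ≠ y}, ∃ w : List σ, w.foldl δ' p = q := by
    intro p q
    obtain ⟨w, hw⟩ := hsc p.val q.val
    refine ⟨w, ?_⟩
    rw [← hπfix p, ← hfold, hw, hπfix]
  -- any reset word of A resets A'
  have hreset : ∀ w : List σ, (Finset.univ.image (fun q => w.foldl δ q)).card = 1 →
      (Finset.univ.image (fun q : {q : Q // q ≠ y} => w.foldl δ' q)).card = 1 := by
    intro w hw
    obtain ⟨c, hc⟩ := (card_image_one_iff _).mp hw
    refine (card_image_one_iff _).mpr ⟨π c, fun s => ?_⟩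
    rw [← hπfix s, ← hfold, hc]
  refine ⟨sc', ?_, ?_⟩
  · obtain ⟨w, -, hw⟩ := hr.1
    exact ⟨w, hreset w hw⟩
  · set S : Set ℕ := {ℓ | ∃ w : List σ, w.length = ℓ ∧
      (Finset.univ.image (fun q : {q : Q // q ≠ y} => w.foldl δ' q)).card = 1} with hS
    have hrS : r ∈ S := by
      obtain ⟨w, hwl, hw⟩ := hr.1
      exact ⟨w, hwl, hreset w hw⟩
    have hne : S.Nonempty := ⟨r, hrS⟩
    refine ⟨sInf S, ⟨Nat.sInf_mem hne, fun b hb => Nat.sInf_le hb⟩, ?_⟩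
    have h1 : sInf S ≤ r := Nat.sInf_le hrS
    have h2 : r ≤ sInf S + 1 := by
      obtain ⟨w, hwl, hw⟩ := Nat.sInf_mem hne
      obtain ⟨c', hc'⟩ := (card_image_one_iff _).mp hw
      obtain ⟨a, ha⟩ := hcol
      apply hr.2
      refine ⟨w ++ [a], by simp [hwl], ?_⟩
      refine (card_image_one_iff _).mpr ⟨δ c'.val a, fun q => ?_⟩
      rw [List.foldl_append, List.foldl_cons, List.foldl_nil]
      have hq : π (w.foldl δ q) = c' := by rw [hfold]; exact hc' (π q)
      by_cases hy : w.foldl δ q = y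
      · have : c' = ⟨x, hxy⟩ := by rw [← hq]; simp [hπ, hy]
        rw [hy, this, ← ha]
      · have : w.foldl δ q = c'.val := by
          rw [← hq]; simp [hπ, hy]
        rw [this]
    omega
end
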